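/- arXiv:2205.05425 — 3 statements merged into one kernel-verified Lean document; each statement's English description precedes it below -/
import Mathlib

section
/- Under the ergodic grouped M-estimation setting, fix τ ∈ 𝒢 and assume that the population criterion S(·, τ) attains a unique minimum on Θ at a point θ*(τ). Let θ̃ₙ : Ω → Θ be measurable maps such that for P-almost every ω, Sₙ(θ̃ₙ(ω), τ)(ω) = min_{θ∈Θ} Sₙ(θ, τ)(ω). Then the profile estimator is consistent: ‖θ̃ₙ − θ*(τ)‖ converges to 0 in P-measure as n → ∞. -/
open MeasureTheory Filter Topology

/-!
Birkhoff averages of an integrable function converge in `L¹`, hence in measure, to its mean: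
von Neumann's theorem gives this in `L²`, ergodicity makes the limit constant, and simple
functions are dense in `L¹`. For `θ₀ ≠ θstar` in `Θ`, dominated convergence yields a ball
`U ∋ θ₀` on which the integrable lower bracket `ω ↦ inf_{θ ∈ U ∩ Θ} ρ θ ω` still has mean above
`S θstar`; by the ergodic theorem, with probability tending to one the sample criterion then
exceeds its value at `θstar` on all of `U ∩ Θ`. Finitely many such balls cover the compact set
`{θ ∈ Θ | ε ≤ dist θ θstar}`, which the minimiser therefore avoids with probability tending
to one.
-/

section BirkhoffAverage

variable {Ω E : Type*} [MeasurableSpace Ω] {μ : Measure Ω} {T : Ω → Ω}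

theorem MeasureTheory.Lp.coeFn_birkhoffAverage_compMeasurePreserving [NormedAddCommGroup E]
    {𝕜 : Type*} [NormedField 𝕜] [NormedSpace 𝕜 E] {p : ENNReal} (hT : MeasurePreserving T μ μ)
    (G : Lp E p μ) (n : ℕ) :
    ⇑(birkhoffAverage 𝕜 (Lp.compMeasurePreserving T hT) id n G) =ᵐ[μ]
      birkhoffAverage 𝕜 T G n := by
  refine (Lp.coeFn_smul _ _).trans (EventuallyEq.const_smul ?_ _)
  refine (Lp.coeFn_fun_finsetSum _ _).trans ?_
  have hiter : ∀ k, ⇑((Lp.compMeasurePreserving T hT)^[k] G) =ᵐ[μ] fun ω => G (T^[k] ω) :=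
    fun k => by
      rw [Lp.compMeasurePreserving_iterate]
      exact Lp.coeFn_compMeasurePreserving G _
  filter_upwards [ae_all_iff.2 hiter] with ω hω
  simp [birkhoffSum, hω]

theorem MeasureTheory.AEStronglyMeasurable.birkhoffAverage {g : Ω → ℝ}
    (hT : Measure.QuasiMeasurePreserving T μ μ) (hg : AEStronglyMeasurable g μ) (n : ℕ) :
    AEStronglyMeasurable (birkhoffAverage ℝ T g n) μ :=
  have hsum : AEStronglyMeasurable (fun ω => ∑ k ∈ Finset.range n, g (T^[k] ω)) μ :=
    Finset.aestronglyMeasurable_fun_sum _ fun k _ => hg.comp_quasiMeasurePreserving (hT.iterate k)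
  hsum.const_smul ((n : ℝ)⁻¹)

theorem MeasureTheory.MeasurePreserving.eLpNorm_birkhoffAverage_le
    (hT : MeasurePreserving T μ μ) {g : Ω → ℝ} (hg : AEStronglyMeasurable g μ) {p : ENNReal}
    (hp : 1 ≤ p) (n : ℕ) :
    eLpNorm (birkhoffAverage ℝ T g n) p μ ≤ eLpNorm g p μ := by
  rcases eq_or_ne n 0 with rfl | hn
  · rw [birkhoffAverage_zero']
    simp
  have hsum : eLpNorm (birkhoffSum T g n) p μ ≤ n * eLpNorm g p μ :=
    calc eLpNorm (birkhoffSum T g n) p μ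
        = eLpNorm (∑ k ∈ Finset.range n, g ∘ T^[k]) p μ := by
          congr 1
          ext ω
          simp [birkhoffSum]
      _ ≤ ∑ k ∈ Finset.range n, eLpNorm (g ∘ T^[k]) p μ := eLpNorm_sum_le
          (fun k _ => hg.comp_quasiMeasurePreserving (hT.iterate k).quasiMeasurePreserving) hp
      _ = n * eLpNorm g p μ := by
          simp [eLpNorm_comp_measurePreserving hg (hT.iterate _)]
  calc eLpNorm (birkhoffAverage ℝ T g n) p μ
      = ‖(n : ℝ)⁻¹‖ₑ * eLpNorm (birkhoffSum T g n) p μ := by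
        rw [← eLpNorm_const_smul]
        rfl
    _ ≤ (n : ENNReal)⁻¹ * (n * eLpNorm g p μ) := by
        gcongr
        simp [enorm_inv, hn]
    _ = eLpNorm g p μ := by
        rw [← mul_assoc, ENNReal.inv_mul_cancel (by simpa using hn) (ENNReal.natCast_ne_top n),
          one_mul]

theorem MeasureTheory.MeasurePreserving.eLpNorm_birkhoffAverage_sub_integral_le
    [IsProbabilityMeasure μ] (hT : MeasurePreserving T μ μ) {h : Ω → ℝ}
    (hh : AEStronglyMeasurable h μ) (n : ℕ) :
    eLpNorm (birkhoffAverage ℝ T h n - fun _ => ∫ ω, h ω ∂μ) 1 μ ≤ 2 * eLpNorm h 1 μ := by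
  have hconst : eLpNorm (fun _ : Ω => ∫ ω, h ω ∂μ) 1 μ ≤ eLpNorm h 1 μ := by
    rw [eLpNorm_const _ one_ne_zero (IsProbabilityMeasure.ne_zero μ),
      eLpNorm_one_eq_lintegral_enorm]
    simpa using enorm_integral_le_lintegral_enorm h
  calc eLpNorm (birkhoffAverage ℝ T h n - fun _ => ∫ ω, h ω ∂μ) 1 μ
      ≤ eLpNorm (birkhoffAverage ℝ T h n) 1 μ + eLpNorm (fun _ : Ω => ∫ ω, h ω ∂μ) 1 μ :=
        eLpNorm_sub_le (hh.birkhoffAverage hT.quasiMeasurePreserving n)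
          aestronglyMeasurable_const le_rfl
    _ ≤ eLpNorm h 1 μ + eLpNorm h 1 μ :=
        add_le_add (hT.eLpNorm_birkhoffAverage_le hh le_rfl n) hconst
    _ = 2 * eLpNorm h 1 μ := (two_mul _).symm

theorem Ergodic.ae_eq_const_of_compMeasurePreserving_eq [NormedAddCommGroup E] {p : ENNReal}
    (hT : Ergodic T μ) {G : Lp E p μ}
    (hG : Lp.compMeasurePreserving T hT.toMeasurePreserving G = G) :
    ∃ c, G =ᵐ[μ] fun _ => c :=
  hT.ae_eq_const_of_ae_eq_comp_ae (Lp.aestronglyMeasurable G)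
    ((Lp.coeFn_compMeasurePreserving G _).symm.trans (by rw [hG]))

theorem Ergodic.tendsto_eLpNorm_birkhoffAverage_sub_integral_two [IsProbabilityMeasure μ]
    (hT : Ergodic T μ) {g : Ω → ℝ} (hg : MemLp g 2 μ) :
    Tendsto (fun n => eLpNorm (birkhoffAverage ℝ T g n - fun _ => ∫ ω, g ω ∂μ) 2 μ) atTop
      (𝓝 0) := by
  set U := (Lp.compMeasurePreservingₗᵢ ℝ T hT.toMeasurePreserving (E := ℝ)
    (p := 2)).toContinuousLinearMap
  set K := U.eqLocus (1 : Lp ℝ 2 μ →L[ℝ] Lp ℝ 2 μ)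
  set G := hg.toLp g
  set L : Lp ℝ 2 μ := ↑(K.orthogonalProjectionOnto G)
  have hconv := U.tendsto_birkhoffAverage_orthogonalProjection
    (LinearIsometry.norm_toContinuousLinearMap_le _) G
  obtain ⟨c, hc⟩ := hT.ae_eq_const_of_compMeasurePreserving_eq (G := L)
    (K.orthogonalProjectionOnto G).2
  -- `1` is `U`-invariant, so pairing with it shows that the projection `L` keeps the mean of `G`
  have hone : indicatorConstLp 2 MeasurableSet.univ (measure_ne_top μ _) (1 : ℝ) ∈ K := rfl
  have hc_eq : c = ∫ ω, g ω ∂μ := by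
    have h := Submodule.inner_orthogonalProjectionOnto_eq_of_mem_left ⟨_, hone⟩ G
    rw [Submodule.coe_inner, L2.inner_indicatorConstLp_one, L2.inner_indicatorConstLp_one,
      setIntegral_univ, setIntegral_univ, integral_congr_ae hc,
      integral_congr_ae hg.coeFn_toLp] at h
    simpa using h
  have hΨ : ∀ n, ⇑(birkhoffAverage ℝ U id n G) =ᵐ[μ] birkhoffAverage ℝ T g n := fun n =>
    (Lp.coeFn_birkhoffAverage_compMeasurePreserving hT.toMeasurePreserving G n).trans
      (hT.quasiMeasurePreserving.birkhoffAverage_ae_eq_of_ae_eq ℝ hg.coeFn_toLp n)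
  rw [Lp.tendsto_Lp_iff_tendsto_eLpNorm'] at hconv
  exact hconv.congr fun n => eLpNorm_congr_ae ((hΨ n).sub (hc.trans (by simp [hc_eq])))

theorem Ergodic.tendsto_eLpNorm_birkhoffAverage_sub_integral_one [IsProbabilityMeasure μ]
    (hT : Ergodic T μ) {f : Ω → ℝ} (hf : Integrable f μ) :
    Tendsto (fun n => eLpNorm (birkhoffAverage ℝ T f n - fun _ => ∫ ω, f ω ∂μ) 1 μ) atTop
      (𝓝 0) := by
  rw [ENNReal.tendsto_atTop_zero]
  intro ε hε
  obtain ⟨g, hfg, hg⟩ := (memLp_one_iff_integrable.2 hf).exists_simpleFunc_eLpNorm_sub_lt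
    ENNReal.one_ne_top (ε := ε / 2 / 2) (by simp [hε.ne'])
  have hgint := hg.integrable le_rfl
  obtain ⟨N, hN⟩ := ENNReal.tendsto_atTop_zero.1
    (hT.tendsto_eLpNorm_birkhoffAverage_sub_integral_two ((g.memLp_top μ).mono_exponent le_top))
    (ε / 2) (by simp [hε.ne'])
  refine ⟨N, fun n hn => ?_⟩
  have hsplit : birkhoffAverage ℝ T f n - (fun _ => ∫ ω, f ω ∂μ) =
      (birkhoffAverage ℝ T (f - ⇑g) n - fun _ => ∫ ω, (f - ⇑g) ω ∂μ) +
        (birkhoffAverage ℝ T g n - fun _ => ∫ ω, g ω ∂μ) := by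
    rw [birkhoffAverage_sub, Pi.sub_def f, integral_sub hf hgint]
    ext ω
    simp only [Pi.add_apply, Pi.sub_apply]
    ring
  have hA : ∀ h : Ω → ℝ, AEStronglyMeasurable h μ →
      AEStronglyMeasurable (birkhoffAverage ℝ T h n - fun _ => ∫ ω, h ω ∂μ) μ := fun h hh =>
    (hh.birkhoffAverage hT.quasiMeasurePreserving n).sub aestronglyMeasurable_const
  calc eLpNorm (birkhoffAverage ℝ T f n - fun _ => ∫ ω, f ω ∂μ) 1 μ
      ≤ eLpNorm (birkhoffAverage ℝ T (f - ⇑g) n - fun _ => ∫ ω, (f - ⇑g) ω ∂μ) 1 μ +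
          eLpNorm (birkhoffAverage ℝ T g n - fun _ => ∫ ω, g ω ∂μ) 1 μ := by
        rw [hsplit]
        exact eLpNorm_add_le (hA _ (hf.sub hgint).aestronglyMeasurable)
          (hA _ hgint.aestronglyMeasurable) le_rfl
    _ ≤ 2 * (ε / 2 / 2) + ε / 2 := by
        gcongr
        · exact (hT.toMeasurePreserving.eLpNorm_birkhoffAverage_sub_integral_le
            (hf.sub hgint).aestronglyMeasurable n).trans (by gcongr)
        · exact (eLpNorm_le_eLpNorm_of_exponent_le one_le_two
            (hA _ hgint.aestronglyMeasurable)).trans (hN n hn)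
    _ = ε := by
        rw [ENNReal.mul_div_cancel' (by simp) (by simp), ENNReal.add_halves]

theorem Ergodic.tendstoInMeasure_birkhoffAverage [IsProbabilityMeasure μ] (hT : Ergodic T μ)
    {f : Ω → ℝ} (hf : Integrable f μ) :
    TendstoInMeasure μ (birkhoffAverage ℝ T f) atTop fun _ => ∫ ω, f ω ∂μ :=
  tendstoInMeasure_of_tendsto_eLpNorm one_ne_zero
    (hf.aestronglyMeasurable.birkhoffAverage hT.quasiMeasurePreserving)
    aestronglyMeasurable_const (hT.tendsto_eLpNorm_birkhoffAverage_sub_integral_one hf)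

end BirkhoffAverage

theorem birkhoffAverage_le_birkhoffAverage {α : Type*} {f : α → α} {g h : α → ℝ} (hgh : g ≤ h)
    (n : ℕ) (x : α) : birkhoffAverage ℝ f g n x ≤ birkhoffAverage ℝ f h n x :=
  smul_le_smul_of_nonneg_left (Finset.sum_le_sum fun _ _ => hgh _) (by positivity)

theorem MeasureTheory.tendsto_measure_le_of_tendstoInMeasure {Ω ι : Type*} [MeasurableSpace Ω]
    {μ : Measure Ω} {l : Filter ι} {X Y : ι → Ω → ℝ} {a b : ℝ}
    (hX : TendstoInMeasure μ X l fun _ => a) (hY : TendstoInMeasure μ Y l fun _ => b)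
    (hab : a < b) : Tendsto (fun i => μ {ω | Y i ω ≤ X i ω}) l (𝓝 0) := by
  rw [tendstoInMeasure_iff_dist] at hX hY
  have hη : 0 < (b - a) / 2 := by linarith
  refine tendsto_of_tendsto_of_tendsto_of_le_of_le tendsto_const_nhds
    (by simpa using (hX _ hη).add (hY _ hη)) (fun i => zero_le) fun i => ?_
  refine (measure_mono fun ω (hω : Y i ω ≤ X i ω) => ?_).trans (measure_union_le _ _)
  by_contra hnot
  simp only [Set.mem_union, Set.mem_ofPred_eq, not_or, not_le, Real.dist_eq, abs_lt] at hnot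
  linarith [hnot.1.2, hnot.2.1]

theorem measurable_iInf_of_continuousOn {Ω E : Type*} [MeasurableSpace Ω] [TopologicalSpace E]
    [SecondCountableTopology E] {s : Set E} {ρ : E → Ω → ℝ}
    (hcont : ∀ ω, ContinuousOn (fun θ => ρ θ ω) s) (hmeas : ∀ θ, Measurable (ρ θ))
    (hbdd : ∀ ω, BddBelow (Set.range fun θ : s => ρ θ ω)) :
    Measurable fun ω => ⨅ θ : s, ρ θ ω := by
  rcases s.eq_empty_or_nonempty with rfl | hne
  · simp [measurable_const]
  have := hne.to_subtype
  obtain ⟨D, hDc, hDd⟩ := TopologicalSpace.exists_countable_dense s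
  have := hDc.to_subtype
  have := hDd.nonempty.to_subtype
  have hD : ∀ ω, ⨅ θ : s, ρ θ ω = ⨅ θ : D, ρ θ ω := fun ω => by
    have hbddD : BddBelow (Set.range fun θ : D => ρ θ ω) :=
      (hbdd ω).mono (Set.range_comp_subset_range (Subtype.val : D → s) fun θ : s => ρ θ ω)
    refine le_antisymm (le_ciInf fun θ => ciInf_le (hbdd ω) θ) (le_ciInf fun θ => ?_)
    have hcl : IsClosed {x : s | ⨅ θ : D, ρ θ ω ≤ ρ x ω} :=
      isClosed_le continuous_const (hcont ω).domRestrict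
    exact hcl.closure_subset_iff.2 (fun x hx => ciInf_le hbddD ⟨x, hx⟩)
      (hDd.closure_eq ▸ Set.mem_univ θ)
  simp_rw [hD]
  exact Measurable.iInf fun θ => hmeas θ

theorem tendsto_iInf_ball_inter {E : Type*} [PseudoMetricSpace E] {f : E → ℝ} {Θ : Set E}
    {θ₀ : E} (h₀ : θ₀ ∈ Θ) (hf : ContinuousWithinAt f Θ θ₀) (hbdd : BddBelow (f '' Θ)) :
    Tendsto (fun δ => ⨅ θ : ↥(Metric.ball θ₀ δ ∩ Θ), f θ) (𝓝[>] 0) (𝓝 (f θ₀)) := by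
  refine tendsto_order.2 ⟨fun a ha => ?_, fun a ha => ?_⟩
  · obtain ⟨b, hab, hb⟩ := exists_between ha
    obtain ⟨ε, hε, hball⟩ := Metric.mem_nhdsWithin_iff.1 (hf.eventually (lt_mem_nhds hb))
    filter_upwards [Ioo_mem_nhdsGT hε] with δ hδ
    have : Nonempty ↥(Metric.ball θ₀ δ ∩ Θ) := ⟨⟨θ₀, Metric.mem_ball_self hδ.1, h₀⟩⟩
    exact hab.trans_le (le_ciInf fun θ =>
      (hball ⟨Metric.ball_subset_ball hδ.2.le θ.2.1, θ.2.2⟩).le)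
  · filter_upwards [self_mem_nhdsWithin] with δ (hδ : 0 < δ)
    have hbdd' : BddBelow (Set.range fun θ : ↥(Metric.ball θ₀ δ ∩ Θ) => f θ) :=
      hbdd.mono (by rintro _ ⟨θ, rfl⟩; exact ⟨θ, θ.2.2, rfl⟩)
    exact (ciInf_le hbdd' ⟨θ₀, Metric.mem_ball_self hδ, h₀⟩).trans_lt ha

section Envelope

variable {Ω E : Type*} {Θ s : Set E} {ρ : E → Ω → ℝ} {F : Ω → ℝ}

theorem bddBelow_range_of_abs_le (hsΘ : s ⊆ Θ) (hρF : ∀ ω, ∀ θ ∈ Θ, |ρ θ ω| ≤ F ω) (ω : Ω) :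
    BddBelow (Set.range fun θ : s => ρ θ ω) :=
  ⟨-F ω, Set.forall_mem_range.2 fun θ => (abs_le.1 (hρF ω θ (hsΘ θ.2))).1⟩

theorem abs_iInf_le_of_abs_le (hs : s.Nonempty) (hsΘ : s ⊆ Θ)
    (hρF : ∀ ω, ∀ θ ∈ Θ, |ρ θ ω| ≤ F ω) (ω : Ω) : |⨅ θ : s, ρ θ ω| ≤ F ω := by
  have := hs.to_subtype
  rw [abs_le]
  exact ⟨le_ciInf fun θ => (abs_le.1 (hρF ω θ (hsΘ θ.2))).1,
    (ciInf_le (bddBelow_range_of_abs_le hsΘ hρF ω) ⟨_, hs.some_mem⟩).trans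
      (abs_le.1 (hρF ω _ (hsΘ hs.some_mem))).2⟩

theorem integrable_iInf_of_abs_le [MeasurableSpace Ω] {P : Measure Ω} [TopologicalSpace E]
    [SecondCountableTopology E] (hs : s.Nonempty) (hsΘ : s ⊆ Θ)
    (hcont : ∀ ω, ContinuousOn (fun θ => ρ θ ω) Θ) (hmeas : ∀ θ, Measurable (ρ θ))
    (hF : Integrable F P) (hρF : ∀ ω, ∀ θ ∈ Θ, |ρ θ ω| ≤ F ω) :
    Integrable (fun ω => ⨅ θ : s, ρ θ ω) P :=
  hF.mono' (measurable_iInf_of_continuousOn (fun ω => (hcont ω).mono hsΘ) hmeas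
    (bddBelow_range_of_abs_le hsΘ hρF)).aestronglyMeasurable
    (ae_of_all _ (abs_iInf_le_of_abs_le hs hsΘ hρF))

theorem exists_lt_integral_iInf_ball_inter [MeasurableSpace Ω] {P : Measure Ω}
    [PseudoMetricSpace E] [SecondCountableTopology E]
    (hcont : ∀ ω, ContinuousOn (fun θ => ρ θ ω) Θ) (hmeas : ∀ θ, Measurable (ρ θ))
    (hF : Integrable F P) (hρF : ∀ ω, ∀ θ ∈ Θ, |ρ θ ω| ≤ F ω) {θ₀ : E} (h₀ : θ₀ ∈ Θ) {c : ℝ}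
    (hc : c < ∫ ω, ρ θ₀ ω ∂P) :
    ∃ δ > 0, c < ∫ ω, ⨅ θ : ↥(Metric.ball θ₀ δ ∩ Θ), ρ θ ω ∂P := by
  have hne : ∀ δ > 0, (Metric.ball θ₀ δ ∩ Θ).Nonempty := fun δ hδ =>
    ⟨θ₀, Metric.mem_ball_self hδ, h₀⟩
  have hptw : ∀ ω, Tendsto (fun δ => ⨅ θ : ↥(Metric.ball θ₀ δ ∩ Θ), ρ θ ω) (𝓝[>] 0)
      (𝓝 (ρ θ₀ ω)) := fun ω => by
    refine tendsto_iInf_ball_inter (f := fun θ => ρ θ ω) h₀ (hcont ω θ₀ h₀) ⟨-F ω, ?_⟩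
    rintro _ ⟨θ, hθ, rfl⟩
    exact (abs_le.1 (hρF ω θ hθ)).1
  have hlim : Tendsto (fun δ => ∫ ω, ⨅ θ : ↥(Metric.ball θ₀ δ ∩ Θ), ρ θ ω ∂P) (𝓝[>] 0)
      (𝓝 (∫ ω, ρ θ₀ ω ∂P)) := by
    refine tendsto_integral_filter_of_dominated_convergence F ?_ ?_ hF (ae_of_all _ hptw)
    · filter_upwards [self_mem_nhdsWithin] with δ hδ
      exact (integrable_iInf_of_abs_le (hne δ hδ) Set.inter_subset_right hcont hmeas hF
        hρF).aestronglyMeasurable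
    · filter_upwards [self_mem_nhdsWithin] with δ hδ
      exact ae_of_all _ (abs_iInf_le_of_abs_le (hne δ hδ) Set.inter_subset_right hρF)
  exact ((hlim.eventually (lt_mem_nhds hc)).and self_mem_nhdsWithin).exists.imp
    fun δ h => ⟨h.2, h.1⟩

theorem Ergodic.exists_nhds_tendsto_measure_birkhoffAverage_le [MeasurableSpace Ω]
    {P : Measure Ω} [IsProbabilityMeasure P] {T : Ω → Ω} (hT : Ergodic T P)
    [PseudoMetricSpace E] [SecondCountableTopology E]
    (hcont : ∀ ω, ContinuousOn (fun θ => ρ θ ω) Θ) (hmeas : ∀ θ, Measurable (ρ θ))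
    (hF : Integrable F P) (hρF : ∀ ω, ∀ θ ∈ Θ, |ρ θ ω| ≤ F ω) {θ₀ θ₁ : E} (h₀ : θ₀ ∈ Θ)
    (h₁ : θ₁ ∈ Θ) (hlt : ∫ ω, ρ θ₁ ω ∂P < ∫ ω, ρ θ₀ ω ∂P) :
    ∃ U ∈ 𝓝 θ₀, Tendsto (fun n => P {ω | ∃ θ ∈ U ∩ Θ,
      birkhoffAverage ℝ T (ρ θ) n ω ≤ birkhoffAverage ℝ T (ρ θ₁) n ω}) atTop (𝓝 0) := by
  obtain ⟨δ, hδ, hlt'⟩ := exists_lt_integral_iInf_ball_inter hcont hmeas hF hρF h₀ hlt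
  have hg : Integrable (fun ω => ⨅ θ : ↥(Metric.ball θ₀ δ ∩ Θ), ρ θ ω) P :=
    integrable_iInf_of_abs_le ⟨θ₀, Metric.mem_ball_self hδ, h₀⟩ Set.inter_subset_right hcont
      hmeas hF hρF
  have hρ₁ : Integrable (ρ θ₁) P :=
    hF.mono' (hmeas θ₁).aestronglyMeasurable (ae_of_all _ fun ω => hρF ω θ₁ h₁)
  refine ⟨Metric.ball θ₀ δ, Metric.ball_mem_nhds θ₀ hδ, ?_⟩
  refine tendsto_of_tendsto_of_tendsto_of_le_of_le tendsto_const_nhds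
    (tendsto_measure_le_of_tendstoInMeasure (hT.tendstoInMeasure_birkhoffAverage hρ₁)
      (hT.tendstoInMeasure_birkhoffAverage hg) hlt') (fun n => zero_le) fun n => ?_
  refine measure_mono fun ω ⟨θ, hθ, hle⟩ => le_trans ?_ hle
  exact birkhoffAverage_le_birkhoffAverage
    (fun ω => ciInf_le (bddBelow_range_of_abs_le Set.inter_subset_right hρF ω) ⟨θ, hθ⟩) n ω

end Envelope

theorem MeasureTheory.tendstoInMeasure_of_isCompact_of_tendsto_measure_nhds {Ω E ι : Type*}
    [MeasurableSpace Ω] {μ : Measure Ω} [PseudoMetricSpace E] {l : Filter ι} {Θ : Set E}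
    (hΘ : IsCompact Θ) {M : ι → E → Ω → ℝ} {θ₁ : E} {θhat : ι → Ω → E}
    (hθhat : ∀ i, ∀ᵐ ω ∂μ, θhat i ω ∈ Θ ∧ M i (θhat i ω) ω ≤ M i θ₁ ω)
    (hsep : ∀ θ₀ ∈ Θ, θ₀ ≠ θ₁ → ∃ U ∈ 𝓝 θ₀,
      Tendsto (fun i => μ {ω | ∃ θ ∈ U ∩ Θ, M i θ ω ≤ M i θ₁ ω}) l (𝓝 0)) :
    TendstoInMeasure μ θhat l fun _ => θ₁ := by
  rw [tendstoInMeasure_iff_dist]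
  intro ε hε
  have hK : IsCompact (Θ \ Metric.ball θ₁ ε) := hΘ.diff Metric.isOpen_ball
  have hne : ∀ θ₀ ∈ Θ \ Metric.ball θ₁ ε, θ₀ ≠ θ₁ := by
    rintro _ ⟨-, hθ⟩ rfl
    exact hθ (Metric.mem_ball_self hε)
  choose! U hU hlim using hsep
  obtain ⟨t, htK, hcover⟩ := hK.elim_nhds_subcover U fun θ₀ h => hU θ₀ h.1 (hne θ₀ h)
  refine tendsto_of_tendsto_of_tendsto_of_le_of_le tendsto_const_nhds
    (by simpa using tendsto_finsetSum t fun θ₀ h => hlim θ₀ (htK θ₀ h).1 (hne θ₀ (htK θ₀ h)))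
    (fun i => zero_le) fun i => ?_
  refine (measure_mono_ae ?_).trans (measure_biUnion_finset_le t _)
  filter_upwards [hθhat i] with ω ⟨hmem, hmin⟩ (hfar : ε ≤ dist (θhat i ω) θ₁)
  obtain ⟨θ₀, hθ₀, hU₀⟩ := Set.mem_iUnion₂.1
    (hcover ⟨hmem, fun h => (Metric.mem_ball.1 h).not_ge hfar⟩)
  exact Set.mem_iUnion₂.2 ⟨θ₀, hθ₀, θhat i ω, ⟨hU₀, hmem⟩, hmin⟩

theorem grouped_Mestimation_profile_consistency_general
    {Ω : Type*} [MeasurableSpace Ω] (P : Measure Ω) [IsProbabilityMeasure P]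
    (T : Ω → Ω) (hT : Ergodic T P)
    {d : ℕ}
    (Θ : Set (EuclideanSpace ℝ (Fin d))) (hΘcomp : IsCompact Θ)
    {𝒢 : Type*}
    (ρ : EuclideanSpace ℝ (Fin d) → 𝒢 → Ω → ℝ)
    (hρcont : ∀ τ ω, ContinuousOn (fun θ => ρ θ τ ω) Θ)
    (hρmeas : ∀ θ τ, Measurable (fun ω => ρ θ τ ω))
    (hρint : ∀ τ, Integrable (fun ω => ⨆ θ : Θ, |ρ (θ : EuclideanSpace ℝ (Fin d)) τ ω|) P)
    -- the sample criterion
    (Sn : ℕ → EuclideanSpace ℝ (Fin d) → 𝒢 → Ω → ℝ)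
    (hSn : ∀ n θ τ ω, Sn n θ τ ω = (n : ℝ)⁻¹ * ∑ t ∈ Finset.range n, ρ θ τ (T^[t] ω))
    -- the population criterion
    (S : EuclideanSpace ℝ (Fin d) → 𝒢 → ℝ)
    (hS : ∀ θ τ, S θ τ = ∫ ω, ρ θ τ ω ∂P)
    -- fix τ and assume S(·, τ) has a unique minimum on Θ at θstar
    (τ : 𝒢)
    (θstar : EuclideanSpace ℝ (Fin d))
    (hθstar_mem : θstar ∈ Θ)
    (hθstar_uniq : ∀ θ ∈ Θ, θ ≠ θstar → S θstar τ < S θ τ)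
    -- the profile estimators
    (θtilde : ℕ → Ω → EuclideanSpace ℝ (Fin d))
    (hθtilde_min : ∀ n, ∀ᵐ ω ∂P, θtilde n ω ∈ Θ ∧
      ∀ θ ∈ Θ, Sn n (θtilde n ω) τ ω ≤ Sn n θ τ ω) :
    TendstoInMeasure P (fun n ω => θtilde n ω) atTop (fun _ => θstar) := by
  have hSn_eq : ∀ n θ, Sn n θ τ = birkhoffAverage ℝ T (fun ω => ρ θ τ ω) n := fun n θ => by
    ext ω
    simp [hSn, birkhoffAverage, birkhoffSum]
  have henv : ∀ ω, ∀ θ ∈ Θ, |ρ θ τ ω| ≤ ⨆ θ : Θ, |ρ (θ : EuclideanSpace ℝ (Fin d)) τ ω| :=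
    fun ω θ hθ => le_ciSup ((hΘcomp.bddAbove_image (hρcont τ ω).abs).mono
      (Set.image_eq_range _ _).superset) ⟨θ, hθ⟩
  refine tendstoInMeasure_of_isCompact_of_tendsto_measure_nhds hΘcomp
    (M := fun n θ => birkhoffAverage ℝ T (fun ω => ρ θ τ ω) n) (fun n => ?_)
    fun θ₀ h₀ hne => ?_
  · filter_upwards [hθtilde_min n] with ω ⟨hmem, hmin⟩
    exact ⟨hmem, by simpa only [hSn_eq] using hmin θstar hθstar_mem⟩
  · refine hT.exists_nhds_tendsto_measure_birkhoffAverage_le (hρcont τ) (hρmeas · τ) (hρint τ)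
      henv h₀ hθstar_mem ?_
    simpa only [hS] using hθstar_uniq θ₀ h₀ hne

/-- In the ergodic grouped M-estimation setting, for a fixed group assignment
`τ`, if the population criterion `S(·, τ)` attains a unique minimum on `Θ` at `θstar`, then
the profile M-estimator `θ̃ₙ` converges to `θstar` in P-measure. -/
theorem grouped_Mestimation_profile_consistency
    {Ω : Type*} [MeasurableSpace Ω] (P : Measure Ω) [IsProbabilityMeasure P]
    (T : Ω → Ω) (hT : Ergodic T P)
    {d : ℕ} (hd : 1 ≤ d)
    (Θ : Set (EuclideanSpace ℝ (Fin d))) (hΘne : Θ.Nonempty) (hΘcomp : IsCompact Θ)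
    {𝒢 : Type*} [Fintype 𝒢] [Nonempty 𝒢]
    (ρ : EuclideanSpace ℝ (Fin d) → 𝒢 → Ω → ℝ)
    (hρcont : ∀ τ ω, ContinuousOn (fun θ => ρ θ τ ω) Θ)
    (hρmeas : ∀ θ τ, Measurable (fun ω => ρ θ τ ω))
    (hρint : ∀ τ, Integrable (fun ω => ⨆ θ : Θ, |ρ (θ : EuclideanSpace ℝ (Fin d)) τ ω|) P)
    -- the sample criterion
    (Sn : ℕ → EuclideanSpace ℝ (Fin d) → 𝒢 → Ω → ℝ)
    (hSn : ∀ n θ τ ω, Sn n θ τ ω = (n : ℝ)⁻¹ * ∑ t ∈ Finset.range n, ρ θ τ (T^[t] ω))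
    -- the population criterion
    (S : EuclideanSpace ℝ (Fin d) → 𝒢 → ℝ)
    (hS : ∀ θ τ, S θ τ = ∫ ω, ρ θ τ ω ∂P)
    -- fix τ and assume S(·, τ) has a unique minimum on Θ at θstar
    (τ : 𝒢)
    (θstar : EuclideanSpace ℝ (Fin d))
    (hθstar_mem : θstar ∈ Θ)
    (hθstar_min : ∀ θ ∈ Θ, S θstar τ ≤ S θ τ)
    (hθstar_uniq : ∀ θ ∈ Θ, θ ≠ θstar → S θstar τ < S θ τ)
    -- the profile estimators
    (θtilde : ℕ → Ω → EuclideanSpace ℝ (Fin d))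
    (hθtilde_meas : ∀ n, Measurable (θtilde n))
    (hθtilde_min : ∀ n, ∀ᵐ ω ∂P, θtilde n ω ∈ Θ ∧
      ∀ θ ∈ Θ, Sn n (θtilde n ω) τ ω ≤ Sn n θ τ ω) :
    TendstoInMeasure P (fun n ω => θtilde n ω) atTop (fun _ => θstar) :=
  grouped_Mestimation_profile_consistency_general P T hT Θ hΘcomp ρ hρcont hρmeas hρint Sn hSn S hS
    τ θstar hθstar_mem hθstar_uniq θtilde hθtilde_min
end

section
/- Under the ergodic grouped M-estimation setting, fix τ ∈ 𝒢 and assume that the population criterion S(·, τ) attains a unique minimum on Θ at a point θ*(τ). Let θ̃ₙ : Ω → Θ be measurable maps such that for P-almost every ω, Sₙ(θ̃ₙ(ω), τ)(ω) = min_{θ∈Θ} Sₙ(θ, τ)(ω). Then the minimized sample criterion converges to the minimized population criterion in probability: the real random variables ω ↦ Sₙ(θ̃ₙ(ω), τ)(ω) converge in P-measure to the constant S(θ*(τ), τ) as n → ∞. -/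
/-!
The upper bound is free: `Sₙ(θ̃ₙ) ≤ Sₙ(θ*)`, and `Sₙ(θ*) → S(θ*)` in probability by the mean
ergodic theorem (von Neumann in `L²`, extended to `L¹` by density and the `L¹`-contractivity of
Birkhoff averages). For the lower bound, continuity and the integrable envelope give, around every
`θ₀ ∈ Θ`, a ball and an integrable lower bracket `g ≤ ρ(θ, τ, ·)` on it with
`E g > S(θ₀) - ε/2 ≥ S(θ*) - ε/2`; finitely many balls cover `Θ`, and the ergodic theorem for
these finitely many brackets bounds `Sₙ(θ)` from below uniformly in `θ ∈ Θ`.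
-/

open MeasureTheory Filter Topology

section

open Function Metric Set

theorem birkhoffSum_eq_sum_comp {α M : Type*} [AddCommMonoid M] (f : α → α) (g : α → M)
    (n : ℕ) : birkhoffSum f g n = ∑ k ∈ Finset.range n, g ∘ f^[k] := by
  ext x
  simp [birkhoffSum]

theorem birkhoffAverage_mono {α : Type*} {f : α → α} {g g' : α → ℝ} (h : g ≤ g') (n : ℕ) :
    birkhoffAverage ℝ f g n ≤ birkhoffAverage ℝ f g' n := fun _ =>
  smul_le_smul_of_nonneg_left (Finset.sum_le_sum fun _ _ => h _) (by positivity)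

variable {Ω E : Type*} [MeasurableSpace Ω] {μ : Measure Ω} {T : Ω → Ω}

namespace MeasureTheory.Lp

variable [NormedAddCommGroup E] {p : ENNReal}

theorem coeFn_birkhoffSum_compMeasurePreserving (hT : MeasurePreserving T μ μ)
    (x : Lp E p μ) (n : ℕ) :
    ⇑(birkhoffSum (compMeasurePreserving T hT) id n x) =ᵐ[μ] birkhoffSum T x n := by
  induction n with
  | zero => simpa [birkhoffSum_zero'] using coeFn_zero E p μ
  | succ n ih =>
    rw [birkhoffSum_succ, id_eq, compMeasurePreserving_iterate]
    filter_upwards [coeFn_add (birkhoffSum (compMeasurePreserving T hT) id n x)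
      (compMeasurePreserving T^[n] (hT.iterate n) x), ih,
      coeFn_compMeasurePreserving x (hT.iterate n)] with ω h₁ h₂ h₃
    rw [h₁, Pi.add_apply, h₂, h₃, comp_apply, birkhoffSum_succ]

theorem coeFn_birkhoffAverage_compMeasurePreserving_s3 {𝕜 : Type*} [NormedField 𝕜]
    [NormedSpace 𝕜 E] (hT : MeasurePreserving T μ μ) (x : Lp E p μ) (n : ℕ) :
    ⇑(birkhoffAverage 𝕜 (compMeasurePreserving T hT) id n x) =ᵐ[μ] birkhoffAverage 𝕜 T x n := by
  filter_upwards [coeFn_smul (n : 𝕜)⁻¹ (birkhoffSum (compMeasurePreserving T hT) id n x),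
    coeFn_birkhoffSum_compMeasurePreserving hT x n] with ω h₁ h₂
  simp [birkhoffAverage, h₁, h₂]

end MeasureTheory.Lp

namespace MeasureTheory.MeasurePreserving

variable [NormedAddCommGroup E] {p : ENNReal}

theorem aestronglyMeasurable_birkhoffAverage [NormedSpace ℝ E] (hT : MeasurePreserving T μ μ)
    {g : Ω → E} (hg : AEStronglyMeasurable g μ) (n : ℕ) :
    AEStronglyMeasurable (birkhoffAverage ℝ T g n) μ := by
  refine AEStronglyMeasurable.const_smul ?_ _
  rw [birkhoffSum_eq_sum_comp]
  exact Finset.aestronglyMeasurable_sum _ fun k _ => hg.comp_measurePreserving (hT.iterate k)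

theorem eLpNorm_birkhoffSum_le (hT : MeasurePreserving T μ μ) (hp : 1 ≤ p) {g : Ω → E}
    (hg : AEStronglyMeasurable g μ) (n : ℕ) :
    eLpNorm (birkhoffSum T g n) p μ ≤ n * eLpNorm g p μ := by
  calc eLpNorm (birkhoffSum T g n) p μ
      ≤ ∑ k ∈ Finset.range n, eLpNorm (g ∘ T^[k]) p μ := by
        rw [birkhoffSum_eq_sum_comp]
        exact eLpNorm_sum_le (fun k _ => hg.comp_measurePreserving (hT.iterate k)) hp
    _ = n * eLpNorm g p μ := by
        simp [eLpNorm_comp_measurePreserving hg (hT.iterate _)]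

theorem eLpNorm_birkhoffAverage_le_s3 [NormedSpace ℝ E] (hT : MeasurePreserving T μ μ)
    (hp : 1 ≤ p) {g : Ω → E} (hg : AEStronglyMeasurable g μ) (n : ℕ) :
    eLpNorm (birkhoffAverage ℝ T g n) p μ ≤ eLpNorm g p μ := by
  rcases n.eq_zero_or_pos with rfl | hn
  · simp
  have hn' : (n : ENNReal) ≠ 0 := by exact_mod_cast hn.ne'
  calc eLpNorm (birkhoffAverage ℝ T g n) p μ
      = (n : ENNReal)⁻¹ * eLpNorm (birkhoffSum T g n) p μ := by
        rw [show birkhoffAverage ℝ T g n = (n : ℝ)⁻¹ • birkhoffSum T g n from rfl,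
          eLpNorm_const_smul]
        simp [enorm_inv, hn.ne']
    _ ≤ (n : ENNReal)⁻¹ * (n * eLpNorm g p μ) := by
        gcongr
        exact hT.eLpNorm_birkhoffSum_le hp hg n
    _ = eLpNorm g p μ := by
        rw [← mul_assoc, ENNReal.inv_mul_cancel hn' (ENNReal.natCast_ne_top n), one_mul]

theorem eLpNorm_birkhoffAverage_sub_integral_le_s3 [IsProbabilityMeasure μ]
    (hT : MeasurePreserving T μ μ) {g : Ω → ℝ} (hg : Integrable g μ) (n : ℕ) :
    eLpNorm (birkhoffAverage ℝ T g n - fun _ => ∫ ω, g ω ∂μ) 1 μ ≤ 2 * eLpNorm g 1 μ := by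
  have hconst : eLpNorm (fun _ : Ω => ∫ ω, g ω ∂μ) 1 μ ≤ eLpNorm g 1 μ := by
    rw [eLpNorm_const _ one_ne_zero (NeZero.ne μ), measure_univ, ENNReal.toReal_one, div_one,
      ENNReal.rpow_one, mul_one, eLpNorm_one_eq_lintegral_enorm]
    exact enorm_integral_le_lintegral_enorm g
  calc eLpNorm (birkhoffAverage ℝ T g n - fun _ => ∫ ω, g ω ∂μ) 1 μ
      ≤ eLpNorm (birkhoffAverage ℝ T g n) 1 μ + eLpNorm (fun _ : Ω => ∫ ω, g ω ∂μ) 1 μ :=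
        eLpNorm_sub_le (hT.aestronglyMeasurable_birkhoffAverage hg.1 n)
          aestronglyMeasurable_const le_rfl
    _ ≤ eLpNorm g 1 μ + eLpNorm g 1 μ :=
        add_le_add (hT.eLpNorm_birkhoffAverage_le_s3 le_rfl hg.1 n) hconst
    _ = 2 * eLpNorm g 1 μ := (two_mul _).symm

end MeasureTheory.MeasurePreserving

noncomputable def koopman (hT : MeasurePreserving T μ μ) : Lp ℝ 2 μ →L[ℝ] Lp ℝ 2 μ :=
  (Lp.compMeasurePreservingₗᵢ ℝ T hT).toContinuousLinearMap

theorem koopman_apply (hT : MeasurePreserving T μ μ) (x : Lp ℝ 2 μ) :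
    koopman hT x = Lp.compMeasurePreserving T hT x :=
  rfl

theorem norm_koopman_le (hT : MeasurePreserving T μ μ) : ‖koopman hT‖ ≤ 1 :=
  LinearIsometry.norm_toContinuousLinearMap_le _

namespace Ergodic

variable [IsProbabilityMeasure μ]

/-- The `koopman`-invariant vectors are the a.e. constants, so projecting onto them is taking
the mean. -/
theorem orthogonalProjectionOnto_eqLocus_koopman (hT : Ergodic T μ) (x : Lp ℝ 2 μ) :
    (((koopman hT.toMeasurePreserving).eqLocus (1 : Lp ℝ 2 μ →L[ℝ] Lp ℝ 2 μ)
      ).orthogonalProjectionOnto x : Lp ℝ 2 μ) = (memLp_const (∫ ω, x ω ∂μ)).toLp _ := by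
  set c := ∫ ω, x ω ∂μ
  have hc : ((memLp_const c).toLp _ : Lp ℝ 2 μ) =ᵐ[μ] fun _ => c := MemLp.coeFn_toLp _
  refine Submodule.eq_starProjection_of_mem_of_inner_eq_zero ?_ fun w hw => ?_
  · refine Lp.ext ((Lp.coeFn_compMeasurePreserving _ _).trans ?_)
    exact (hT.quasiMeasurePreserving.ae_eq_comp hc).trans hc.symm
  · have hwT : (w : Ω → ℝ) ∘ T =ᵐ[μ] w := by
      have hUw : koopman hT.toMeasurePreserving w = w := hw
      rw [koopman_apply] at hUw
      exact (Lp.coeFn_compMeasurePreserving w _).symm.trans (by rw [hUw])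
    obtain ⟨cw, hcw⟩ := hT.ae_eq_const_of_ae_eq_comp_ae (Lp.aestronglyMeasurable w) hwT
    have hx : Integrable x μ := (Lp.memLp x).integrable one_le_two
    calc inner ℝ (x - (memLp_const c).toLp _) w
        = ∫ ω, (x ω - c) * cw ∂μ := by
          rw [L2.inner_def]
          refine integral_congr_ae ?_
          filter_upwards [Lp.coeFn_sub x ((memLp_const c).toLp _), hc, hcw] with ω h₁ h₂ h₃
          rw [h₁, Pi.sub_apply, h₂, h₃, const_apply, Real.inner_apply]
      _ = 0 := by
          rw [integral_mul_const, integral_sub hx (integrable_const c)]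
          simp [c]

theorem tendsto_eLpNorm_two_birkhoffAverage_sub_integral (hT : Ergodic T μ) {g : Ω → ℝ}
    (hg : MemLp g 2 μ) :
    Tendsto (fun n => eLpNorm (birkhoffAverage ℝ T g n - fun _ => ∫ ω, g ω ∂μ) 2 μ)
      atTop (𝓝 0) := by
  set U := koopman hT.toMeasurePreserving
  have hgx : hg.toLp g =ᵐ[μ] g := hg.coeFn_toLp
  have hlim := U.tendsto_birkhoffAverage_orthogonalProjection (norm_koopman_le _) (hg.toLp g)
  rw [hT.orthogonalProjectionOnto_eqLocus_koopman, integral_congr_ae hgx] at hlim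
  set y : Lp ℝ 2 μ := (memLp_const (∫ ω, g ω ∂μ)).toLp _
  have hdist : ∀ n, eLpNorm (birkhoffAverage ℝ T g n - fun _ => ∫ ω, g ω ∂μ) 2 μ
      = ‖birkhoffAverage ℝ U id n (hg.toLp g) - y‖ₑ := fun n => by
    rw [Lp.enorm_def]
    refine eLpNorm_congr_ae ?_
    filter_upwards [Lp.coeFn_sub (birkhoffAverage ℝ U id n (hg.toLp g)) y,
      Lp.coeFn_birkhoffAverage_compMeasurePreserving_s3 (𝕜 := ℝ) hT.toMeasurePreserving
        (hg.toLp g) n,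
      hT.toMeasurePreserving.quasiMeasurePreserving.birkhoffAverage_ae_eq_of_ae_eq ℝ hgx n,
      (memLp_const (μ := μ) (p := 2) (∫ ω, g ω ∂μ)).coeFn_toLp] with ω h₁ h₂ h₃ h₄
    rw [h₁, Pi.sub_apply, Pi.sub_apply, ← h₃, ← h₂, h₄]
    rfl
  simp_rw [hdist]
  simpa only [sub_self, enorm_zero, comp_def] using
    (continuous_enorm.tendsto (y - y)).comp (hlim.sub_const y)

theorem tendsto_eLpNorm_one_birkhoffAverage_sub_integral (hT : Ergodic T μ) {g : Ω → ℝ}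
    (hg : Integrable g μ) :
    Tendsto (fun n => eLpNorm (birkhoffAverage ℝ T g n - fun _ => ∫ ω, g ω ∂μ) 1 μ)
      atTop (𝓝 0) := by
  refine ENNReal.tendsto_atTop_zero.2 fun ε hε => ?_
  have hε3 : ε / 3 ≠ 0 := (ENNReal.div_pos hε.ne' ENNReal.ofNat_ne_top).ne'
  obtain ⟨h, hgh, -⟩ :=
    (memLp_one_iff_integrable.2 hg).exists_simpleFunc_eLpNorm_sub_lt ENNReal.one_ne_top hε3
  have hh₂ : MemLp h 2 μ := (h.memLp_top μ).mono_exponent le_top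
  have hh₁ : Integrable h μ := hh₂.integrable one_le_two
  have hlim : Tendsto (fun n => eLpNorm (birkhoffAverage ℝ T h n - fun _ => ∫ ω, h ω ∂μ) 1 μ)
      atTop (𝓝 0) :=
    tendsto_of_tendsto_of_tendsto_of_le_of_le tendsto_const_nhds
      (hT.tendsto_eLpNorm_two_birkhoffAverage_sub_integral hh₂) (fun _ => zero_le)
      fun n => eLpNorm_le_eLpNorm_of_exponent_le one_le_two
        ((hT.aestronglyMeasurable_birkhoffAverage hh₁.1 n).sub aestronglyMeasurable_const)
  obtain ⟨N, hN⟩ := ENNReal.tendsto_atTop_zero.1 hlim (ε / 3) (pos_iff_ne_zero.2 hε3)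
  refine ⟨N, fun n hn => ?_⟩
  have hsplit : birkhoffAverage ℝ T g n - (fun _ => ∫ ω, g ω ∂μ)
      = (birkhoffAverage ℝ T (g - ⇑h) n - fun _ => ∫ ω, (g - ⇑h) ω ∂μ)
        + (birkhoffAverage ℝ T h n - fun _ => ∫ ω, h ω ∂μ) := by
    ext ω
    simp only [birkhoffAverage_sub, Pi.add_apply, Pi.sub_apply, integral_sub hg hh₁]
    ring
  calc eLpNorm (birkhoffAverage ℝ T g n - fun _ => ∫ ω, g ω ∂μ) 1 μ
      ≤ 2 * eLpNorm (g - ⇑h) 1 μ + ε / 3 := by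
        rw [hsplit]
        refine (eLpNorm_add_le ?_ ?_ le_rfl).trans (add_le_add ?_ (hN n hn))
        · exact (hT.aestronglyMeasurable_birkhoffAverage (hg.1.sub hh₁.1) n).sub
            aestronglyMeasurable_const
        · exact (hT.aestronglyMeasurable_birkhoffAverage hh₁.1 n).sub aestronglyMeasurable_const
        · exact hT.toMeasurePreserving.eLpNorm_birkhoffAverage_sub_integral_le_s3 (hg.sub hh₁) n
    _ ≤ 2 * (ε / 3) + ε / 3 := by gcongr
    _ = ε := by rw [two_mul, ENNReal.add_thirds]

theorem tendstoInMeasure_birkhoffAverage_s3 (hT : Ergodic T μ) {g : Ω → ℝ} (hg : Integrable g μ) :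
    TendstoInMeasure μ (birkhoffAverage ℝ T g) atTop fun _ => ∫ ω, g ω ∂μ :=
  tendstoInMeasure_of_tendsto_eLpNorm one_ne_zero
    (hT.aestronglyMeasurable_birkhoffAverage hg.1) aestronglyMeasurable_const
    (hT.tendsto_eLpNorm_one_birkhoffAverage_sub_integral hg)

end Ergodic

variable [PseudoMetricSpace E] {Θ : Set E}

section LowerEnvelope

variable {D : Set E} {φ : E → ℝ} {θ₀ : E} {δ : ℝ}

theorem nonempty_inter_ball_of_mem_closure (h : θ₀ ∈ closure D) (hδ : 0 < δ) :
    (D ∩ ball θ₀ δ).Nonempty :=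
  let ⟨y, hy, hdist⟩ := Metric.mem_closure_iff.1 h δ hδ
  ⟨y, hy, mem_ball'.2 hdist⟩

theorem ciInf_inter_ball_le {θ : E} (hφ : ContinuousWithinAt φ Θ θ) (hDΘ : D ⊆ Θ)
    (hΘD : Θ ⊆ closure D) (hbdd : BddBelow (φ '' D)) (hθ : θ ∈ Θ ∩ ball θ₀ δ) :
    ⨅ x : ↥(D ∩ ball θ₀ δ), φ x ≤ φ θ := by
  have hθD : θ ∈ closure (D ∩ ball θ₀ δ) := by
    rw [inter_comm]
    exact isOpen_ball.inter_closure ⟨hθ.2, hΘD hθ.1⟩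
  have hbdd' : BddBelow (range fun x : ↥(D ∩ ball θ₀ δ) => φ x) :=
    hbdd.mono (range_subset_iff.2 fun x => mem_image_of_mem φ x.2.1)
  exact ContinuousWithinAt.closure_le hθD continuousWithinAt_const
    (hφ.mono (inter_subset_left.trans hDΘ)) fun x hx => ciInf_le hbdd' ⟨x, hx⟩

theorem tendsto_ciInf_inter_ball (hφ : ContinuousWithinAt φ Θ θ₀) (hθ₀ : θ₀ ∈ Θ) (hDΘ : D ⊆ Θ)
    (hΘD : Θ ⊆ closure D) (hbdd : BddBelow (φ '' D)) :
    Tendsto (fun δ => ⨅ x : ↥(D ∩ ball θ₀ δ), φ x) (𝓝[>] 0) (𝓝 (φ θ₀)) := by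
  refine tendsto_order.2 ⟨fun a ha => ?_, fun a ha => ?_⟩
  · obtain ⟨b, hab, hb⟩ := exists_between ha
    obtain ⟨r, hr, hball⟩ := Metric.mem_nhdsWithin_iff.1 (hφ.eventually (lt_mem_nhds hb))
    filter_upwards [Ioo_mem_nhdsGT hr] with δ hδ
    have := (nonempty_inter_ball_of_mem_closure (hΘD hθ₀) hδ.1).to_subtype
    exact hab.trans_le (le_ciInf fun x =>
      (hball ⟨ball_subset_ball hδ.2.le x.2.2, hDΘ x.2.1⟩).le)
  · filter_upwards [self_mem_nhdsWithin] with δ hδ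
    exact (ciInf_inter_ball_le hφ hDΘ hΘD hbdd ⟨hθ₀, mem_ball_self hδ⟩).trans_lt ha

end LowerEnvelope

theorem exists_integrable_lower_bracket (hΘ : IsCompact Θ) {f : E → Ω → ℝ}
    (hcont : ∀ ω, ContinuousOn (f · ω) Θ) (hmeas : ∀ θ, Measurable (f θ)) {G : Ω → ℝ}
    (hG : Integrable G μ) (hbound : ∀ θ ∈ Θ, ∀ ω, ‖f θ ω‖ ≤ G ω) {θ₀ : E} (hθ₀ : θ₀ ∈ Θ)
    {ε : ℝ} (hε : 0 < ε) :
    ∃ δ > 0, ∃ g : Ω → ℝ, Integrable g μ ∧ (∀ θ ∈ Θ ∩ ball θ₀ δ, ∀ ω, g ω ≤ f θ ω) ∧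
      ∫ ω, f θ₀ ω ∂μ - ε < ∫ ω, g ω ∂μ := by
  -- the envelope runs over a countable dense `D ⊆ Θ` to be measurable; by continuity it is
  -- still a lower bound on all of `Θ ∩ ball θ₀ δ`
  obtain ⟨D, hDΘ, hDc, hΘD⟩ := hΘ.isSeparable.exists_countable_dense_subset
  let lo : ℝ → Ω → ℝ := fun δ ω => ⨅ x : ↥(D ∩ ball θ₀ δ), f x ω
  have hlower : ∀ θ ∈ Θ, ∀ ω, -G ω ≤ f θ ω := fun θ hθ ω =>
    neg_le_of_abs_le ((Real.norm_eq_abs _).symm.trans_le (hbound θ hθ ω))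
  have hbdd : ∀ ω, BddBelow ((f · ω) '' D) := fun ω =>
    ⟨-G ω, forall_mem_image.2 fun θ hθ => hlower θ (hDΘ hθ) ω⟩
  have hlo_le : ∀ δ, ∀ θ ∈ Θ ∩ ball θ₀ δ, ∀ ω, lo δ ω ≤ f θ ω := fun δ θ hθ ω =>
    ciInf_inter_ball_le (hcont ω θ hθ.1) hDΘ hΘD (hbdd ω) hθ
  have hlo_meas : ∀ δ, Measurable (lo δ) := fun δ => by
    have := (hDc.mono (inter_subset_left (t := ball θ₀ δ))).to_subtype
    exact Measurable.iInf fun x => hmeas x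
  have hlo_norm : ∀ δ > 0, ∀ ω, ‖lo δ ω‖ ≤ G ω := fun δ hδ ω => by
    have := (nonempty_inter_ball_of_mem_closure (hΘD hθ₀) hδ).to_subtype
    rw [Real.norm_eq_abs, abs_le]
    refine ⟨le_ciInf fun x => hlower x (hDΘ x.2.1) ω, ?_⟩
    exact (hlo_le δ θ₀ ⟨hθ₀, mem_ball_self hδ⟩ ω).trans ((le_abs_self _).trans (hbound θ₀ hθ₀ ω))
  have hlo_tendsto : ∀ ω, Tendsto (fun δ => lo δ ω) (𝓝[>] 0) (𝓝 (f θ₀ ω)) := fun ω =>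
    tendsto_ciInf_inter_ball (φ := (f · ω)) (hcont ω θ₀ hθ₀) hθ₀ hDΘ hΘD (hbdd ω)
  have hlim : Tendsto (fun δ => ∫ ω, lo δ ω ∂μ) (𝓝[>] 0) (𝓝 (∫ ω, f θ₀ ω ∂μ)) :=
    tendsto_integral_filter_of_dominated_convergence G
      (Eventually.of_forall fun δ => (hlo_meas δ).aestronglyMeasurable)
      (eventually_nhdsWithin_of_forall fun δ hδ => ae_of_all _ (hlo_norm δ hδ)) hG
      (ae_of_all _ hlo_tendsto)
  obtain ⟨δ, hδ, hδε⟩ := ((eventually_mem_nhdsWithin (a := (0 : ℝ)) (s := Ioi 0)).and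
    (hlim.eventually (lt_mem_nhds (sub_lt_self _ hε)))).exists
  exact ⟨δ, hδ, lo δ, hG.mono' (hlo_meas δ).aestronglyMeasurable (ae_of_all _ (hlo_norm δ hδ)),
    hlo_le δ, hδε⟩

theorem Ergodic.tendsto_measure_exists_birkhoffAverage_le [IsProbabilityMeasure μ]
    (hT : Ergodic T μ) (hΘ : IsCompact Θ) {f : E → Ω → ℝ}
    (hcont : ∀ ω, ContinuousOn (f · ω) Θ) (hmeas : ∀ θ, Measurable (f θ)) {G : Ω → ℝ}
    (hG : Integrable G μ) (hbound : ∀ θ ∈ Θ, ∀ ω, ‖f θ ω‖ ≤ G ω) {m : ℝ}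
    (hm : ∀ θ ∈ Θ, m ≤ ∫ ω, f θ ω ∂μ) {ε : ℝ} (hε : 0 < ε) :
    Tendsto (fun n => μ {ω | ∃ θ ∈ Θ, birkhoffAverage ℝ T (f θ) n ω ≤ m - ε}) atTop (𝓝 0) := by
  choose δ hδ g hg hgf hgint using fun θ₀ : Θ =>
    exists_integrable_lower_bracket hΘ hcont hmeas hG hbound θ₀.2 (half_pos hε)
  obtain ⟨t, ht⟩ := hΘ.elim_finite_subcover (fun θ₀ : Θ => ball (θ₀ : E) (δ θ₀))
    (fun _ => isOpen_ball) fun θ hθ => mem_iUnion.2 ⟨⟨θ, hθ⟩, mem_ball_self (hδ _)⟩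
  have hsub : ∀ n, {ω | ∃ θ ∈ Θ, birkhoffAverage ℝ T (f θ) n ω ≤ m - ε} ⊆
      ⋃ i ∈ t, {ω | ε / 2 ≤ dist (birkhoffAverage ℝ T (g i) n ω) (∫ ω, g i ω ∂μ)} := by
    rintro n ω ⟨θ, hθ, hle⟩
    obtain ⟨i, hi, hθi⟩ := mem_iUnion₂.1 (ht hθ)
    have hgθ := birkhoffAverage_mono (f := T) (fun ω => hgf i θ ⟨hθ, hθi⟩ ω) n ω
    have hmi := hm i i.2
    have hgi := hgint i
    refine mem_iUnion₂.2 ⟨i, hi, ?_⟩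
    rw [mem_ofPred_eq, Real.dist_eq, abs_sub_comm]
    exact le_trans (by linarith) (le_abs_self _)
  have hsum : Tendsto (fun n => ∑ i ∈ t,
      μ {ω | ε / 2 ≤ dist (birkhoffAverage ℝ T (g i) n ω) (∫ ω, g i ω ∂μ)}) atTop (𝓝 0) := by
    simpa using tendsto_finsetSum t fun i _ =>
      tendstoInMeasure_iff_dist.1 (hT.tendstoInMeasure_birkhoffAverage_s3 (hg i)) (ε / 2)
        (half_pos hε)
  exact tendsto_of_tendsto_of_tendsto_of_le_of_le tendsto_const_nhds hsum (fun _ => zero_le)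
    fun n => (measure_mono (hsub n)).trans (measure_biUnion_finset_le _ _)

theorem tendstoInMeasure_of_ae_le_of_tendsto_measure_le {ι : Type*} {l : Filter ι}
    {X Y : ι → Ω → ℝ} {c : ℝ} (hXY : ∀ i, X i ≤ᵐ[μ] Y i)
    (hY : TendstoInMeasure μ Y l fun _ => c)
    (hX : ∀ ε > 0, Tendsto (fun i => μ {ω | X i ω ≤ c - ε}) l (𝓝 0)) :
    TendstoInMeasure μ X l fun _ => c := by
  rw [tendstoInMeasure_iff_dist] at hY ⊢
  intro ε hε
  have hsub : ∀ i, {ω | ε ≤ dist (X i ω) c}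
      ≤ᵐ[μ] ({ω | X i ω ≤ c - ε} ∪ {ω | ε ≤ dist (Y i ω) c} : Set Ω) := fun i => by
    filter_upwards [hXY i] with ω hω (hdist : ε ≤ dist (X i ω) c)
    show X i ω ≤ c - ε ∨ ε ≤ dist (Y i ω) c
    rw [Real.dist_eq, le_abs] at hdist
    rw [Real.dist_eq]
    rcases hdist with h | h
    · exact Or.inr ((by linarith : ε ≤ Y i ω - c).trans (le_abs_self _))
    · exact Or.inl (by linarith)
  have hlim := (hX ε hε).add (hY ε hε)
  rw [add_zero] at hlim
  exact tendsto_of_tendsto_of_tendsto_of_le_of_le tendsto_const_nhds hlim (fun _ => zero_le)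
    fun i => (measure_mono_ae (hsub i)).trans (measure_union_le _ _)

end

theorem grouped_Mestimation_minimized_criterion_consistency_general
    {Ω : Type*} [MeasurableSpace Ω] (P : Measure Ω) [IsProbabilityMeasure P]
    (T : Ω → Ω) (hT : Ergodic T P)
    {d : ℕ}
    (Θ : Set (EuclideanSpace ℝ (Fin d))) (hΘcomp : IsCompact Θ)
    {𝒢 : Type*}
    (ρ : EuclideanSpace ℝ (Fin d) → 𝒢 → Ω → ℝ)
    (hρcont : ∀ τ ω, ContinuousOn (fun θ => ρ θ τ ω) Θ)
    (hρmeas : ∀ θ τ, Measurable (fun ω => ρ θ τ ω))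
    (hρint : ∀ τ, Integrable (fun ω => ⨆ θ : Θ, |ρ (θ : EuclideanSpace ℝ (Fin d)) τ ω|) P)
    -- the sample criterion
    (Sn : ℕ → EuclideanSpace ℝ (Fin d) → 𝒢 → Ω → ℝ)
    (hSn : ∀ n θ τ ω, Sn n θ τ ω = (n : ℝ)⁻¹ * ∑ t ∈ Finset.range n, ρ θ τ (T^[t] ω))
    -- the population criterion
    (S : EuclideanSpace ℝ (Fin d) → 𝒢 → ℝ)
    (hS : ∀ θ τ, S θ τ = ∫ ω, ρ θ τ ω ∂P)
    -- fix τ and assume S(·, τ) has a unique minimum on Θ at θstar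
    (τ : 𝒢)
    (θstar : EuclideanSpace ℝ (Fin d))
    (hθstar_mem : θstar ∈ Θ)
    (hθstar_min : ∀ θ ∈ Θ, S θstar τ ≤ S θ τ)
    -- the profile estimators
    (θtilde : ℕ → Ω → EuclideanSpace ℝ (Fin d))
    (hθtilde_min : ∀ n, ∀ᵐ ω ∂P, θtilde n ω ∈ Θ ∧
      ∀ θ ∈ Θ, Sn n (θtilde n ω) τ ω ≤ Sn n θ τ ω) :
    TendstoInMeasure P (fun n ω => Sn n (θtilde n ω) τ ω) atTop (fun _ => S θstar τ) := by
  have hbound : ∀ θ ∈ Θ, ∀ ω, ‖ρ θ τ ω‖ ≤ ⨆ θ : Θ, |ρ (θ : EuclideanSpace ℝ (Fin d)) τ ω| :=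
    fun θ hθ ω => le_ciSup (f := fun θ : Θ => |ρ θ τ ω|)
      (by simpa only [Set.image_eq_range] using
        (hΘcomp.image_of_continuousOn (hρcont τ ω).abs).bddAbove) ⟨θ, hθ⟩
  have hSn_avg : ∀ n θ, Sn n θ τ = birkhoffAverage ℝ T (fun ω => ρ θ τ ω) n :=
    fun n θ => funext (hSn n θ τ)
  have hint : Integrable (fun ω => ρ θstar τ ω) P := (hρint τ).mono'
    (hρmeas θstar τ).aestronglyMeasurable (ae_of_all _ (hbound θstar hθstar_mem))
  refine tendstoInMeasure_of_ae_le_of_tendsto_measure_le (Y := fun n => Sn n θstar τ)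
    (fun n => ?_) ?_ fun ε hε => ?_
  · filter_upwards [hθtilde_min n] with ω hω using hω.2 θstar hθstar_mem
  · simpa only [hSn_avg, hS] using hT.tendstoInMeasure_birkhoffAverage_s3 hint
  · refine tendsto_of_tendsto_of_tendsto_of_le_of_le tendsto_const_nhds
      (hT.tendsto_measure_exists_birkhoffAverage_le hΘcomp (hρcont τ) (fun θ => hρmeas θ τ)
        (hρint τ) hbound (m := S θstar τ) (fun θ hθ => hS θ τ ▸ hθstar_min θ hθ) hε)
      (fun _ => zero_le) fun n => measure_mono_ae ?_
    filter_upwards [hθtilde_min n] with ω hω hle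
    exact ⟨θtilde n ω, hω.1, hSn_avg n _ ▸ hle⟩

/-- In the ergodic grouped M-estimation setting, for a fixed group assignment
`τ`, if the population criterion `S(·, τ)` attains a unique minimum on `Θ` at `θstar`, then
the minimized sample criterion `Sₙ(θ̃ₙ, τ)` converges in P-measure to `S(θstar, τ)`. -/
theorem grouped_Mestimation_minimized_criterion_consistency
    {Ω : Type*} [MeasurableSpace Ω] (P : Measure Ω) [IsProbabilityMeasure P]
    (T : Ω → Ω) (hT : Ergodic T P)
    {d : ℕ} (hd : 1 ≤ d)
    (Θ : Set (EuclideanSpace ℝ (Fin d))) (hΘne : Θ.Nonempty) (hΘcomp : IsCompact Θ)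
    {𝒢 : Type*} [Fintype 𝒢] [Nonempty 𝒢]
    (ρ : EuclideanSpace ℝ (Fin d) → 𝒢 → Ω → ℝ)
    (hρcont : ∀ τ ω, ContinuousOn (fun θ => ρ θ τ ω) Θ)
    (hρmeas : ∀ θ τ, Measurable (fun ω => ρ θ τ ω))
    (hρint : ∀ τ, Integrable (fun ω => ⨆ θ : Θ, |ρ (θ : EuclideanSpace ℝ (Fin d)) τ ω|) P)
    -- the sample criterion
    (Sn : ℕ → EuclideanSpace ℝ (Fin d) → 𝒢 → Ω → ℝ)
    (hSn : ∀ n θ τ ω, Sn n θ τ ω = (n : ℝ)⁻¹ * ∑ t ∈ Finset.range n, ρ θ τ (T^[t] ω))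
    -- the population criterion
    (S : EuclideanSpace ℝ (Fin d) → 𝒢 → ℝ)
    (hS : ∀ θ τ, S θ τ = ∫ ω, ρ θ τ ω ∂P)
    -- fix τ and assume S(·, τ) has a unique minimum on Θ at θstar
    (τ : 𝒢)
    (θstar : EuclideanSpace ℝ (Fin d))
    (hθstar_mem : θstar ∈ Θ)
    (hθstar_min : ∀ θ ∈ Θ, S θstar τ ≤ S θ τ)
    (hθstar_uniq : ∀ θ ∈ Θ, θ ≠ θstar → S θstar τ < S θ τ)
    -- the profile estimators
    (θtilde : ℕ → Ω → EuclideanSpace ℝ (Fin d))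
    (hθtilde_meas : ∀ n, Measurable (θtilde n))
    (hθtilde_min : ∀ n, ∀ᵐ ω ∂P, θtilde n ω ∈ Θ ∧
      ∀ θ ∈ Θ, Sn n (θtilde n ω) τ ω ≤ Sn n θ τ ω) :
    TendstoInMeasure P (fun n ω => Sn n (θtilde n ω) τ ω) atTop (fun _ => S θstar τ) :=
  grouped_Mestimation_minimized_criterion_consistency_general P T hT Θ hΘcomp ρ hρcont hρmeas hρint
    Sn hSn S hS τ θstar hθstar_mem hθstar_min θtilde hθtilde_min
end

section
/- Uniform law of large numbers for ergodic sequences on a compact parameter set: Let (Ω, 𝒜, P) be a probability space, T : Ω → Ω a measure-preserving ergodic map, d ≥ 1, Θ ⊆ ℝ^d a nonempty compact set, and ρ : Θ × Ω → ℝ such that θ ↦ ρ(θ, ω) is continuous on Θ for every ω, ω ↦ ρ(θ, ω) is measurable for every θ, and E[sup_{θ∈Θ} |ρ(θ, ·)|] < ∞. Then the uniform deviation sup_{θ∈Θ} |(1/n) Σ_{t=0}^{n−1} ρ(θ, T^t ω) − E[ρ(θ, ·)]| converges to 0 for P-almost every ω (and hence in P-measure) as n → ∞. -/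
/-!
For one integrable `g`, Garsia's proof of the maximal ergodic inequality shows that if the
Birkhoff sums of `g` are a.e. unbounded above then `∫ g ≥ 0`; the set where they are bounded
above is `T`-invariant, so by ergodicity `∫ g < 0` forces them to be a.e. bounded above.
Applied to `g - (∫ g + ε / 2)` this is the one-sided ergodic theorem
`limsup (1/n) S_n g ≤ ∫ g + ε`.

Uniformity in `θ` comes from brackets: by dominated convergence, the supremum of `ρ(·, ω)` over a
small ball around `θ₀` has integral close to `∫ ρ(θ₀, ·)`, so finitely many balls cover the
compact `Θ`, and the one-sided theorem for these finitely many local suprema bounds all averages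
from above at once. The same argument for `-ρ` gives the lower bound. Suprema over `Θ` are
measurable because they agree with suprema over a countable dense subset.
-/

open MeasureTheory Filter Topology

section MaximalErgodic

variable {Ω : Type*} {T : Ω → Ω} {g : Ω → ℝ}

noncomputable def birkhoffMax (T : Ω → Ω) (g : Ω → ℝ) (n : ℕ) : Ω → ℝ :=
  (Finset.range (n + 1)).sup' Finset.nonempty_range_add_one (birkhoffSum T g)

lemma birkhoffMax_apply (n : ℕ) (ω : Ω) :
    birkhoffMax T g n ω =
      (Finset.range (n + 1)).sup' Finset.nonempty_range_add_one fun k => birkhoffSum T g k ω :=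
  Finset.sup'_apply _ _ _

lemma birkhoffSum_le_birkhoffMax {k n : ℕ} (hk : k ≤ n) (ω : Ω) :
    birkhoffSum T g k ω ≤ birkhoffMax T g n ω :=
  Finset.le_sup' (birkhoffSum T g) (Finset.mem_range_succ_iff.2 hk) ω

lemma birkhoffMax_nonneg (n : ℕ) (ω : Ω) : 0 ≤ birkhoffMax T g n ω := by
  simpa using birkhoffSum_le_birkhoffMax (T := T) (g := g) n.zero_le ω

lemma monotone_birkhoffMax (ω : Ω) : Monotone fun n => birkhoffMax T g n ω :=
  monotone_nat_of_le_succ fun n =>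
    Pi.le_def.1 (Finset.sup'_mono (birkhoffSum T g) (Finset.range_subset_range.2 (n + 1).le_succ)
      Finset.nonempty_range_add_one) ω

/-- Garsia's inequality: where the running maximum is positive it is attained by some
`S (k + 1) = g + S k ∘ T` with `k < n`. -/
lemma birkhoffMax_le_add_birkhoffMax_comp {n : ℕ} {ω : Ω} (h : 0 < birkhoffMax T g n ω) :
    birkhoffMax T g n ω ≤ g ω + birkhoffMax T g n (T ω) := by
  obtain ⟨k, hk, hmax⟩ := Finset.exists_mem_eq_sup' Finset.nonempty_range_add_one
    fun k => birkhoffSum T g k ω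
  rw [← birkhoffMax_apply] at hmax
  rw [hmax] at h ⊢
  cases k with
  | zero => simp at h
  | succ k =>
    rw [birkhoffSum_succ']
    gcongr
    exact birkhoffSum_le_birkhoffMax (by grind) _

lemma bddAbove_birkhoffSum_comp_iff (ω : Ω) :
    BddAbove (Set.range fun n => birkhoffSum T g n (T ω)) ↔
      BddAbove (Set.range fun n => birkhoffSum T g n ω) := by
  simp only [bddAbove_def, Set.forall_mem_range]
  constructor
  · rintro ⟨M, hM⟩
    refine ⟨max (g ω + M) 0, fun n => ?_⟩
    cases n with
    | zero => simp
    | succ n => rw [birkhoffSum_succ']; exact le_max_of_le_left (by linarith [hM n])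
  · rintro ⟨M, hM⟩
    exact ⟨M - g ω, fun n => by linarith [hM (n + 1), birkhoffSum_succ' T g n ω]⟩

lemma birkhoffAverage_le_birkhoffAverage_s4 {g g' : Ω → ℝ} (h : ∀ ω, g ω ≤ g' ω)
    (n : ℕ) (ω : Ω) : birkhoffAverage ℝ T g n ω ≤ birkhoffAverage ℝ T g' n ω :=
  mul_le_mul_of_nonneg_left (Finset.sum_le_sum fun _ _ => h _) (by positivity)

variable [MeasurableSpace Ω] {P : Measure Ω}

lemma integrable_birkhoffSum (hT : MeasurePreserving T P P) (hg : Integrable g P) (n : ℕ) :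
    Integrable (birkhoffSum T g n) P := by
  unfold birkhoffSum
  exact integrable_finsetSum _ fun k _ => (hT.iterate k).integrable_comp_of_integrable hg

lemma integrable_birkhoffMax (hT : MeasurePreserving T P P) (hg : Integrable g P) (n : ℕ) :
    Integrable (birkhoffMax T g n) P :=
  Finset.sup'_induction (p := fun f => Integrable f P) _ _ (fun _ h₁ _ h₂ => h₁.sup h₂)
    fun k _ => integrable_birkhoffSum hT hg k

lemma measurable_birkhoffMax (hT : Measurable T) (hg : Measurable g) (n : ℕ) :
    Measurable (birkhoffMax T g n) :=
  Finset.measurable_sup' _ fun _ _ =>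
    Finset.measurable_sum _ fun i _ => hg.comp (hT.iterate i)

lemma setIntegral_birkhoffMax_pos_nonneg (hT : MeasurePreserving T P P) (hgm : Measurable g)
    (hg : Integrable g P) (n : ℕ) :
    0 ≤ ∫ ω in {ω | 0 < birkhoffMax T g n ω}, g ω ∂P := by
  set M := birkhoffMax T g n
  have hM := measurable_birkhoffMax hT.measurable hgm n
  have hE : MeasurableSet {ω | 0 < M ω} := measurableSet_lt measurable_const hM
  have hMT : Integrable (fun ω => M (T ω)) P :=
    hT.integrable_comp_of_integrable (integrable_birkhoffMax hT hg n)
  have h_comp : ∫ ω, M (T ω) ∂P = ∫ ω, M ω ∂P := by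
    rw [← integral_map hT.measurable.aemeasurable (hT.map_eq ▸ hM.aestronglyMeasurable),
      hT.map_eq]
  have h_le : ∀ ω, M ω - M (T ω) ≤ {ω | 0 < M ω}.indicator g ω := by
    intro ω
    by_cases hω : 0 < M ω
    · rw [Set.indicator_of_mem (s := {ω | 0 < M ω}) hω]
      linarith [birkhoffMax_le_add_birkhoffMax_comp hω]
    · rw [Set.indicator_of_notMem (s := {ω | 0 < M ω}) hω]
      linarith [birkhoffMax_nonneg (T := T) (g := g) n (T ω)]
  calc (0 : ℝ) = ∫ ω, (M ω - M (T ω)) ∂P := by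
        rw [integral_sub (integrable_birkhoffMax hT hg n) hMT, h_comp, sub_self]
    _ ≤ ∫ ω, {ω | 0 < M ω}.indicator g ω ∂P :=
        integral_mono ((integrable_birkhoffMax hT hg n).sub hMT) (hg.indicator hE) h_le
    _ = ∫ ω in {ω | 0 < M ω}, g ω ∂P := integral_indicator hE

theorem integral_nonneg_of_ae_exists_birkhoffSum_pos (hT : MeasurePreserving T P P)
    (hgm : Measurable g) (hg : Integrable g P)
    (hpos : ∀ᵐ ω ∂P, ∃ n, 0 < birkhoffSum T g n ω) :
    0 ≤ ∫ ω, g ω ∂P := by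
  set E : ℕ → Set Ω := fun n => {ω | 0 < birkhoffMax T g n ω}
  have hE : ∀ n, MeasurableSet (E n) := fun n =>
    measurableSet_lt measurable_const (measurable_birkhoffMax hT.measurable hgm n)
  have hE_mono : Monotone E := fun m n hmn ω (hω : 0 < _) =>
    hω.trans_le (monotone_birkhoffMax ω hmn)
  have hE_univ : (⋃ n, E n) =ᵐ[P] Set.univ := by
    refine eventuallyEq_univ.2 ?_
    filter_upwards [hpos] with ω ⟨n, hn⟩
    exact Set.mem_iUnion.2 ⟨n, hn.trans_le (birkhoffSum_le_birkhoffMax le_rfl ω)⟩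
  have h_lim := tendsto_setIntegral_of_monotone hE hE_mono hg.integrableOn
  rw [Measure.restrict_congr_set hE_univ, Measure.restrict_univ] at h_lim
  exact ge_of_tendsto' h_lim fun n => setIntegral_birkhoffMax_pos_nonneg hT hgm hg n

theorem ae_bddAbove_birkhoffSum_of_integral_neg (hT : Ergodic T P) (hgm : Measurable g)
    (hg : Integrable g P) (hneg : ∫ ω, g ω ∂P < 0) :
    ∀ᵐ ω ∂P, BddAbove (Set.range fun n => birkhoffSum T g n ω) := by
  set A := {ω | BddAbove (Set.range fun n => birkhoffSum T g n ω)}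
  have hA : MeasurableSet A := measurableSet_bddAbove_range fun n =>
    Finset.measurable_sum _ fun i _ => hgm.comp (hT.measurable.iterate i)
  have hTA : T ⁻¹' A = A := Set.ext fun ω => bddAbove_birkhoffSum_comp_iff ω
  refine (hT.toPreErgodic.ae_mem_or_ae_notMem hA hTA).resolve_right fun h_unbdd => ?_
  have hpos : ∀ᵐ ω ∂P, ∃ n, 0 < birkhoffSum T g n ω := by
    filter_upwards [h_unbdd] with ω hω
    obtain ⟨_, ⟨n, rfl⟩, hn⟩ := not_bddAbove_iff.1 hω 0
    exact ⟨n, hn⟩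
  exact hneg.not_ge
    (integral_nonneg_of_ae_exists_birkhoffSum_pos hT.toMeasurePreserving hgm hg hpos)

theorem ae_eventually_birkhoffAverage_le [IsProbabilityMeasure P] (hT : Ergodic T P)
    (hgm : Measurable g) (hg : Integrable g P) {ε : ℝ} (hε : 0 < ε) :
    ∀ᵐ ω ∂P, ∀ᶠ n in atTop, birkhoffAverage ℝ T g n ω ≤ ∫ ω', g ω' ∂P + ε := by
  set c := ∫ ω', g ω' ∂P + ε / 2 with hc
  have h_int : ∫ ω, (g ω - c) ∂P < 0 := by
    rw [integral_sub hg (integrable_const c)]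
    simp only [integral_const, probReal_univ, smul_eq_mul, one_mul, c]
    linarith
  filter_upwards [ae_bddAbove_birkhoffSum_of_integral_neg hT (hgm.sub measurable_const)
    (hg.sub (integrable_const c)) h_int] with ω ⟨M, hM⟩
  have hM' : ∀ n : ℕ, birkhoffSum T g n ω ≤ n * c + M := fun n => by
    have := hM ⟨n, rfl⟩
    simp only [birkhoffSum, Pi.sub_apply, Finset.sum_sub_distrib, Finset.sum_const,
      Finset.card_range, nsmul_eq_mul] at this
    exact sub_le_iff_le_add'.1 this
  filter_upwards [eventually_gt_atTop 0,
    (tendsto_const_div_atTop_nhds_zero_nat M).eventually_le_const (half_pos hε)] with n hn hMn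
  have hn' : (0 : ℝ) < n := by exact_mod_cast hn
  calc birkhoffAverage ℝ T g n ω = (n : ℝ)⁻¹ * birkhoffSum T g n ω := rfl
    _ ≤ (n : ℝ)⁻¹ * (n * c + M) := by gcongr; exact hM' n
    _ = c + M / n := by field_simp
    _ ≤ ∫ ω', g ω' ∂P + ε := by linarith

end MaximalErgodic

section LocalSup

variable {X Ω : Type*} [PseudoMetricSpace X] {Θ : Set X} {f : X → Ω → ℝ}
  {G : Ω → ℝ}

noncomputable def localSup (f : X → Ω → ℝ) (Θ : Set X) (θ₀ : X) (r : ℝ) (ω : Ω) : ℝ :=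
  ⨆ θ : ↥(Θ ∩ Metric.closedBall θ₀ r), f θ ω

variable {θ₀ : X} {r : ℝ}

lemma le_localSup (hG : ∀ ω, ∀ θ ∈ Θ, |f θ ω| ≤ G ω) {θ : X} (hθ : θ ∈ Θ)
    (hθr : dist θ θ₀ ≤ r) (ω : Ω) : f θ ω ≤ localSup f Θ θ₀ r ω :=
  le_ciSup (f := fun θ : ↥(Θ ∩ Metric.closedBall θ₀ r) => f θ ω)
    ⟨G ω, Set.forall_mem_range.2 fun θ => (le_abs_self _).trans (hG ω θ θ.2.1)⟩ ⟨θ, hθ, hθr⟩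

lemma localSup_le (hθ₀ : θ₀ ∈ Θ) (hr : 0 ≤ r) {ω : Ω} {c : ℝ}
    (hc : ∀ θ ∈ Θ, dist θ θ₀ ≤ r → f θ ω ≤ c) : localSup f Θ θ₀ r ω ≤ c :=
  have : Nonempty ↥(Θ ∩ Metric.closedBall θ₀ r) := ⟨θ₀, hθ₀, Metric.mem_closedBall_self hr⟩
  ciSup_le fun θ => hc θ θ.2.1 θ.2.2

lemma abs_localSup_le (hG : ∀ ω, ∀ θ ∈ Θ, |f θ ω| ≤ G ω) (hθ₀ : θ₀ ∈ Θ) (hr : 0 ≤ r)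
    (ω : Ω) : |localSup f Θ θ₀ r ω| ≤ G ω :=
  abs_le.2 ⟨(neg_le_of_abs_le (hG ω θ₀ hθ₀)).trans
      (le_localSup hG hθ₀ (by simpa using hr) ω),
    localSup_le hθ₀ hr fun θ hθ _ => (le_abs_self _).trans (hG ω θ hθ)⟩

lemma tendsto_localSup (hG : ∀ ω, ∀ θ ∈ Θ, |f θ ω| ≤ G ω) (hθ₀ : θ₀ ∈ Θ) {ω : Ω}
    (hcont : ContinuousWithinAt (fun θ => f θ ω) Θ θ₀) :
    Tendsto (fun r => localSup f Θ θ₀ r ω) (𝓝[>] 0) (𝓝 (f θ₀ ω)) := by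
  refine tendsto_order.2 ⟨fun a ha => ?_, fun a ha => ?_⟩
  · filter_upwards [self_mem_nhdsWithin] with r (hr : 0 < r)
    exact ha.trans_le (le_localSup hG hθ₀ (by simpa using hr.le) ω)
  · obtain ⟨b, hb, hba⟩ := exists_between ha
    obtain ⟨δ, hδ, h_near⟩ := Metric.mem_nhdsWithin_iff.1 (hcont.eventually (gt_mem_nhds hb))
    filter_upwards [Ioo_mem_nhdsGT hδ] with r ⟨hr, hrδ⟩
    refine (localSup_le hθ₀ hr.le fun θ hθ hθr => ?_).trans_lt hba
    exact (h_near ⟨hθr.trans_lt hrδ, hθ⟩ : f θ ω < b).le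

variable [MeasurableSpace Ω] {P : Measure Ω}

theorem measurable_iSup_of_continuousOn {K : Set X} (hK : IsCompact K)
    (hcont : ∀ ω, ContinuousOn (fun θ => f θ ω) K) (hmeas : ∀ θ, Measurable (f θ)) :
    Measurable fun ω => ⨆ θ : K, f θ ω := by
  have := hK.isSeparable.separableSpace
  obtain ⟨D, hD, hDK⟩ := TopologicalSpace.exists_countable_dense K
  have := hD.to_subtype
  have h_eq : (fun ω => ⨆ θ : K, f θ ω) = fun ω => ⨆ θ : D, f θ ω := funext fun ω =>
    (hDK.ciSup' (hcont ω).domRestrict).symm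
  rw [h_eq]
  exact Measurable.iSup fun θ => hmeas θ

lemma measurable_localSup (hΘ : IsCompact Θ) (hcont : ∀ ω, ContinuousOn (fun θ => f θ ω) Θ)
    (hmeas : ∀ θ, Measurable (f θ)) : Measurable (localSup f Θ θ₀ r) :=
  measurable_iSup_of_continuousOn (hΘ.inter_right Metric.isClosed_closedBall)
    (fun ω => (hcont ω).mono Set.inter_subset_left) hmeas

lemma integrable_localSup (hΘ : IsCompact Θ) (hG : ∀ ω, ∀ θ ∈ Θ, |f θ ω| ≤ G ω)
    (hGint : Integrable G P) (hcont : ∀ ω, ContinuousOn (fun θ => f θ ω) Θ)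
    (hmeas : ∀ θ, Measurable (f θ)) (hθ₀ : θ₀ ∈ Θ) (hr : 0 ≤ r) :
    Integrable (localSup f Θ θ₀ r) P :=
  hGint.mono' (measurable_localSup hΘ hcont hmeas).aestronglyMeasurable
    (ae_of_all _ (abs_localSup_le hG hθ₀ hr))

lemma continuousOn_integral_of_abs_le (hG : ∀ ω, ∀ θ ∈ Θ, |f θ ω| ≤ G ω)
    (hGint : Integrable G P) (hcont : ∀ ω, ContinuousOn (fun θ => f θ ω) Θ)
    (hmeas : ∀ θ, Measurable (f θ)) : ContinuousOn (fun θ => ∫ ω, f θ ω ∂P) Θ :=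
  continuousOn_of_dominated (fun θ _ => (hmeas θ).aestronglyMeasurable)
    (fun θ hθ => ae_of_all _ fun ω => hG ω θ hθ) hGint (ae_of_all _ hcont)

lemma tendsto_integral_localSup (hΘ : IsCompact Θ) (hG : ∀ ω, ∀ θ ∈ Θ, |f θ ω| ≤ G ω)
    (hGint : Integrable G P) (hcont : ∀ ω, ContinuousOn (fun θ => f θ ω) Θ)
    (hmeas : ∀ θ, Measurable (f θ)) (hθ₀ : θ₀ ∈ Θ) :
    Tendsto (fun r => ∫ ω, localSup f Θ θ₀ r ω ∂P) (𝓝[>] 0) (𝓝 (∫ ω, f θ₀ ω ∂P)) :=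
  tendsto_integral_filter_of_dominated_convergence G
    (Eventually.of_forall fun _ => (measurable_localSup hΘ hcont hmeas).aestronglyMeasurable)
    (eventually_nhdsWithin_of_forall fun r (hr : 0 < r) =>
      ae_of_all _ (abs_localSup_le hG hθ₀ hr.le))
    hGint (ae_of_all _ fun ω => tendsto_localSup hG hθ₀ (hcont ω θ₀ hθ₀))

lemma exists_pos_integral_localSup_le (hΘ : IsCompact Θ) (hG : ∀ ω, ∀ θ ∈ Θ, |f θ ω| ≤ G ω)
    (hGint : Integrable G P) (hcont : ∀ ω, ContinuousOn (fun θ => f θ ω) Θ)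
    (hmeas : ∀ θ, Measurable (f θ)) (hθ₀ : θ₀ ∈ Θ) {ε : ℝ} (hε : 0 < ε) :
    ∃ r > 0, ∫ ω, localSup f Θ θ₀ r ω ∂P ≤ ∫ ω, f θ₀ ω ∂P + ε ∧
      ∀ θ ∈ Θ, dist θ θ₀ < r → ∫ ω, f θ₀ ω ∂P ≤ ∫ ω, f θ ω ∂P + ε := by
  obtain ⟨δ, hδ, h_near⟩ := Metric.continuousWithinAt_iff.1
    (continuousOn_integral_of_abs_le hG hGint hcont hmeas θ₀ hθ₀) ε hε
  obtain ⟨r, h_int, hr, hrδ⟩ := (((tendsto_integral_localSup hΘ hG hGint hcont hmeas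
    hθ₀).eventually_le_const (lt_add_of_pos_right _ hε)).and (Ioo_mem_nhdsGT hδ)).exists
  refine ⟨r, hr, h_int, fun θ hθ hθr => ?_⟩
  have := h_near hθ (hθr.trans hrδ)
  rw [Real.dist_eq, abs_lt] at this
  linarith

end LocalSup

section UniformErgodic

variable {X Ω : Type*} [PseudoMetricSpace X] [MeasurableSpace Ω] {P : Measure Ω}
  {T : Ω → Ω} {Θ : Set X} {f : X → Ω → ℝ} {G : Ω → ℝ}

theorem measurable_iSup_abs_birkhoffAverage_sub (hT : Measurable T) (hΘ : IsCompact Θ)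
    (hG : ∀ ω, ∀ θ ∈ Θ, |f θ ω| ≤ G ω) (hGint : Integrable G P)
    (hcont : ∀ ω, ContinuousOn (fun θ => f θ ω) Θ) (hmeas : ∀ θ, Measurable (f θ)) (n : ℕ) :
    Measurable fun ω => ⨆ θ : Θ, |birkhoffAverage ℝ T (f θ) n ω - ∫ ω', f θ ω' ∂P| := by
  have h_avg_cont : ∀ ω, ContinuousOn (fun θ => birkhoffAverage ℝ T (f θ) n ω) Θ := fun ω =>
    continuousOn_const.mul (continuousOn_finsetSum _ fun k _ => hcont (T^[k] ω))
  have h_avg_meas : ∀ θ, Measurable (birkhoffAverage ℝ T (f θ) n) := fun θ =>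
    measurable_const.mul (Finset.measurable_sum _ fun k _ => (hmeas θ).comp (hT.iterate k))
  exact measurable_iSup_of_continuousOn
    (f := fun θ ω => |birkhoffAverage ℝ T (f θ) n ω - ∫ ω', f θ ω' ∂P|) hΘ
    (fun ω => ((h_avg_cont ω).sub (continuousOn_integral_of_abs_le hG hGint hcont hmeas)).abs)
    fun θ => ((h_avg_meas θ).sub measurable_const).abs

variable [IsProbabilityMeasure P]

theorem ae_eventually_forall_birkhoffAverage_le (hT : Ergodic T P) (hΘ : IsCompact Θ)
    (hG : ∀ ω, ∀ θ ∈ Θ, |f θ ω| ≤ G ω) (hGint : Integrable G P)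
    (hcont : ∀ ω, ContinuousOn (fun θ => f θ ω) Θ) (hmeas : ∀ θ, Measurable (f θ))
    {ε : ℝ} (hε : 0 < ε) :
    ∀ᵐ ω ∂P, ∀ᶠ n in atTop, ∀ θ ∈ Θ,
      birkhoffAverage ℝ T (f θ) n ω ≤ ∫ ω', f θ ω' ∂P + ε := by
  choose r hr h_int h_near using fun θ₀ : Θ =>
    exists_pos_integral_localSup_le (P := P) hΘ hG hGint hcont hmeas θ₀.2 (ε := ε / 3)
      (by positivity)
  obtain ⟨s, hs⟩ := hΘ.elim_finite_subcover (fun θ₀ : Θ => Metric.ball (θ₀ : X) (r θ₀))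
    (fun _ => Metric.isOpen_ball) fun θ hθ =>
      Set.mem_iUnion.2 ⟨⟨θ, hθ⟩, Metric.mem_ball_self (hr _)⟩
  have h_birk : ∀ᵐ ω ∂P, ∀ θ₀ ∈ s, ∀ᶠ n in atTop,
      birkhoffAverage ℝ T (localSup f Θ θ₀ (r θ₀)) n ω ≤
        ∫ ω', localSup f Θ θ₀ (r θ₀) ω' ∂P + ε / 3 :=
    (eventually_all_finset s).2 fun θ₀ _ => ae_eventually_birkhoffAverage_le hT
      (measurable_localSup hΘ hcont hmeas)
      (integrable_localSup hΘ hG hGint hcont hmeas θ₀.2 (hr θ₀).le) (by positivity)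
  filter_upwards [h_birk] with ω hω
  filter_upwards [(eventually_all_finset s).2 hω] with n hn θ hθ
  obtain ⟨θ₀, hθ₀s, hθθ₀⟩ := Set.mem_iUnion₂.1 (hs hθ)
  calc birkhoffAverage ℝ T (f θ) n ω
      ≤ birkhoffAverage ℝ T (localSup f Θ θ₀ (r θ₀)) n ω :=
        birkhoffAverage_le_birkhoffAverage_s4 (le_localSup hG hθ (Metric.mem_ball.1 hθθ₀).le) n ω
    _ ≤ ∫ ω', localSup f Θ θ₀ (r θ₀) ω' ∂P + ε / 3 := hn θ₀ hθ₀s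
    _ ≤ ∫ ω', f θ ω' ∂P + ε := by
        linarith [h_int θ₀, h_near θ₀ θ hθ (Metric.mem_ball.1 hθθ₀)]

theorem ae_eventually_forall_abs_birkhoffAverage_sub_le (hT : Ergodic T P) (hΘ : IsCompact Θ)
    (hG : ∀ ω, ∀ θ ∈ Θ, |f θ ω| ≤ G ω) (hGint : Integrable G P)
    (hcont : ∀ ω, ContinuousOn (fun θ => f θ ω) Θ) (hmeas : ∀ θ, Measurable (f θ))
    {ε : ℝ} (hε : 0 < ε) :
    ∀ᵐ ω ∂P, ∀ᶠ n in atTop, ∀ θ ∈ Θ,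
      |birkhoffAverage ℝ T (f θ) n ω - ∫ ω', f θ ω' ∂P| ≤ ε := by
  have h_low := ae_eventually_forall_birkhoffAverage_le (f := -f) hT hΘ
    (by simpa only [Pi.neg_apply, abs_neg] using hG) hGint (fun ω => (hcont ω).neg)
    (fun θ => (hmeas θ).neg) hε
  filter_upwards [ae_eventually_forall_birkhoffAverage_le hT hΘ hG hGint hcont hmeas hε,
    h_low] with ω h_up h_low
  filter_upwards [h_up, h_low] with n h_up h_low θ hθ
  have h_low := h_low θ hθ
  simp only [Pi.neg_apply, birkhoffAverage_neg, integral_neg] at h_low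
  exact abs_sub_le_iff.2 ⟨by linarith [h_up θ hθ], by linarith⟩

lemma tendsto_iSup_of_forall_eventually_le {ι : Type*} {F : ℕ → ι → ℝ}
    (h₀ : ∀ n i, 0 ≤ F n i) (h : ∀ k : ℕ, ∀ᶠ n in atTop, ∀ i, F n i ≤ 1 / (k + 1)) :
    Tendsto (fun n => ⨆ i, F n i) atTop (𝓝 0) := by
  refine tendsto_order.2 ⟨fun a ha => Eventually.of_forall fun n =>
    ha.trans_le (Real.iSup_nonneg (h₀ n)), fun a ha => ?_⟩
  obtain ⟨k, hk⟩ := exists_nat_one_div_lt ha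
  filter_upwards [h k] with n hn
  exact (Real.iSup_le hn (by positivity)).trans_lt hk

theorem ae_tendsto_iSup_abs_birkhoffAverage_sub (hT : Ergodic T P) (hΘ : IsCompact Θ)
    (hG : ∀ ω, ∀ θ ∈ Θ, |f θ ω| ≤ G ω) (hGint : Integrable G P)
    (hcont : ∀ ω, ContinuousOn (fun θ => f θ ω) Θ) (hmeas : ∀ θ, Measurable (f θ)) :
    ∀ᵐ ω ∂P, Tendsto (fun n => ⨆ θ : Θ,
      |birkhoffAverage ℝ T (f θ) n ω - ∫ ω', f θ ω' ∂P|) atTop (𝓝 0) := by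
  filter_upwards [ae_all_iff.2 fun k : ℕ => ae_eventually_forall_abs_birkhoffAverage_sub_le
    hT hΘ hG hGint hcont hmeas (ε := 1 / (k + 1)) (by positivity)] with ω hω
  exact tendsto_iSup_of_forall_eventually_le (fun _ _ => abs_nonneg _)
    fun k => (hω k).mono fun _ hn θ => hn θ θ.2

end UniformErgodic

theorem uniform_LLN_ergodic_general
    {Ω : Type*} [MeasurableSpace Ω] (P : Measure Ω) [IsProbabilityMeasure P]
    (T : Ω → Ω) (hT : Ergodic T P)
    {d : ℕ}
    (Θ : Set (EuclideanSpace ℝ (Fin d))) (hΘcomp : IsCompact Θ)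
    (ρ : EuclideanSpace ℝ (Fin d) → Ω → ℝ)
    (hρcont : ∀ ω, ContinuousOn (fun θ => ρ θ ω) Θ)
    (hρmeas : ∀ θ, Measurable (fun ω => ρ θ ω))
    (hρint : Integrable (fun ω => ⨆ θ : Θ, |ρ (θ : EuclideanSpace ℝ (Fin d)) ω|) P) :
    (∀ᵐ ω ∂P, Tendsto
        (fun n : ℕ => ⨆ θ : Θ,
          |(n : ℝ)⁻¹ * ∑ t ∈ Finset.range n, ρ (θ : EuclideanSpace ℝ (Fin d)) (T^[t] ω)
            - ∫ ω', ρ (θ : EuclideanSpace ℝ (Fin d)) ω' ∂P|)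
        atTop (𝓝 0)) ∧
    TendstoInMeasure P
      (fun (n : ℕ) ω => ⨆ θ : Θ,
        |(n : ℝ)⁻¹ * ∑ t ∈ Finset.range n, ρ (θ : EuclideanSpace ℝ (Fin d)) (T^[t] ω)
          - ∫ ω', ρ (θ : EuclideanSpace ℝ (Fin d)) ω' ∂P|)
      atTop (fun _ => 0) := by
  have hG : ∀ ω, ∀ θ ∈ Θ, |ρ θ ω| ≤ ⨆ θ : Θ, |ρ θ ω| := fun ω θ hθ =>
    le_ciSup (f := fun θ : Θ => |ρ θ ω|)
      (by simpa only [Set.image_eq_range] using hΘcomp.bddAbove_image (hρcont ω).abs) ⟨θ, hθ⟩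
  have h_ae := ae_tendsto_iSup_abs_birkhoffAverage_sub hT hΘcomp hG hρint hρcont hρmeas
  exact ⟨h_ae, tendstoInMeasure_of_tendsto_ae (fun n => (measurable_iSup_abs_birkhoffAverage_sub
    hT.measurable hΘcomp hG hρint hρcont hρmeas n).aestronglyMeasurable) h_ae⟩

/-- Uniform law of large numbers for ergodic sequences on a compact parameter
set: the uniform deviation of the ergodic averages of `ρ(θ, ·)` from their expectations
converges to 0 almost everywhere, and hence in P-measure. -/
theorem uniform_LLN_ergodic
    {Ω : Type*} [MeasurableSpace Ω] (P : Measure Ω) [IsProbabilityMeasure P]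
    (T : Ω → Ω) (hT : Ergodic T P)
    {d : ℕ} (hd : 1 ≤ d)
    (Θ : Set (EuclideanSpace ℝ (Fin d))) (hΘne : Θ.Nonempty) (hΘcomp : IsCompact Θ)
    (ρ : EuclideanSpace ℝ (Fin d) → Ω → ℝ)
    (hρcont : ∀ ω, ContinuousOn (fun θ => ρ θ ω) Θ)
    (hρmeas : ∀ θ, Measurable (fun ω => ρ θ ω))
    (hρint : Integrable (fun ω => ⨆ θ : Θ, |ρ (θ : EuclideanSpace ℝ (Fin d)) ω|) P) :
    (∀ᵐ ω ∂P, Tendsto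
        (fun n : ℕ => ⨆ θ : Θ,
          |(n : ℝ)⁻¹ * ∑ t ∈ Finset.range n, ρ (θ : EuclideanSpace ℝ (Fin d)) (T^[t] ω)
            - ∫ ω', ρ (θ : EuclideanSpace ℝ (Fin d)) ω' ∂P|)
        atTop (𝓝 0)) ∧
    TendstoInMeasure P
      (fun (n : ℕ) ω => ⨆ θ : Θ,
        |(n : ℝ)⁻¹ * ∑ t ∈ Finset.range n, ρ (θ : EuclideanSpace ℝ (Fin d)) (T^[t] ω)
          - ∫ ω', ρ (θ : EuclideanSpace ℝ (Fin d)) ω' ∂P|)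
      atTop (fun _ => 0) :=
  uniform_LLN_ergodic_general P T hT Θ hΘcomp ρ hρcont hρmeas hρint
end
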